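/- arXiv:2402.10707 — 6 statements merged into one kernel-verified Lean document; each statement's English description precedes it below -/
import Mathlib

section
/- (Closedness of the bad set 𝒱.) Let r ≥ 2, n ≥ 2, m ∈ {1,…,n−1} and s ∈ {1,…,r−1} be integers. Then 𝒱(r,s,m,n) is a closed subset of 𝒫*(r,n) for the topology induced by 𝒫(r,n): if a sequence (Q_k)_{k∈ℕ} ⊆ 𝒱(r,s,m,n) converges in 𝒫(r,n) to some Q̄ with ∇Q̄(0) ≠ 0, then Q̄ ∈ 𝒱(r,s,m,n). -/
/-!
Choose orthonormal frames `A k` witnessing `Q k ∈ 𝒱`. Orthonormal frames form a compact set, so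
along a subsequence `A k → B` with `B` orthonormal. The coefficients of `x ↦ Q(Ax)` depend
continuously on `A` and linearly on the coefficients of `Q`, and all polynomials involved have
degree at most `r`, hence coefficients in one fixed finite set of monomials; so the restrictions
converge in the coefficient sup-norm to `x ↦ Qbar(Bx)`, which therefore lies in the closed set
`Σ(r,s,m)`.
-/

open MvPolynomial Metric Set Matrix
open scoped RealInnerProductSpace

noncomputable section

/-- `𝒫(r,n)`: polynomials in `n` real variables with zero constant term and
total degree at most `r`. -/
def PolySpace (r n : ℕ) : Set (MvPolynomial (Fin n) ℝ) :=
  {P | P.coeff 0 = 0 ∧ P.totalDegree ≤ r}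

/-- Sup-norm of the coefficients of a polynomial. -/
def polyNorm {n : ℕ} (P : MvPolynomial (Fin n) ℝ) : ℝ :=
  ⨆ μ : Fin n →₀ ℕ, |P.coeff μ|

/-- The vector of partial derivatives (the gradient) of a polynomial at a point. -/
def polyGrad {n : ℕ} (P : MvPolynomial (Fin n) ℝ) (x : Fin n → ℝ) : Fin n → ℝ :=
  fun i => eval x (pderiv i P)

/-- `𝒫*(r,n)`: elements of `𝒫(r,n)` with nonzero gradient at the origin. -/
def PolySpaceStar (r n : ℕ) : Set (MvPolynomial (Fin n) ℝ) :=
  {P | P ∈ PolySpace r n ∧ polyGrad P 0 ≠ 0}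

/-- The `s`-truncation parametrized by the `i`-th coordinate with coefficients `a`:
the curve whose `i`-th component is `t` and whose `j`-th component (`j ≠ i`) is
`∑_{k=1}^{s} a_{jk} t^k`. -/
def truncCurve {m : ℕ} (s : ℕ) (i : Fin m) (a : Fin m → Fin s → ℝ) : ℝ → Fin m → ℝ :=
  fun t j => if j = i then t else ∑ k : Fin s, a j k * t ^ ((k : ℕ) + 1)

/-- `P` satisfies the `s`-vanishing condition on the curve `γ`. -/
def SVanishing {m : ℕ} (s : ℕ) (P : MvPolynomial (Fin m) ℝ) (γ : ℝ → Fin m → ℝ) : Prop :=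
  ∀ ℓ : Fin m, ∀ α ≤ s, iteratedDeriv α (fun t => eval (γ t) (pderiv ℓ P)) 0 = 0

/-- `σ^i(r,s,m)`: polynomials of `𝒫(r,m)` that satisfy the `s`-vanishing condition on
some `s`-truncation parametrized by the `i`-th coordinate. -/
def sigmaI (r s m : ℕ) (i : Fin m) : Set (MvPolynomial (Fin m) ℝ) :=
  {P | P ∈ PolySpace r m ∧ ∃ a : Fin m → Fin s → ℝ, SVanishing s P (truncCurve s i a)}

/-- `σ(r,s,m)`. -/
def sigmaSet (r s m : ℕ) : Set (MvPolynomial (Fin m) ℝ) :=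
  ⋃ i : Fin m, sigmaI r s m i

/-- Closure with respect to the coefficient sup-norm. -/
def closureNorm {n : ℕ} (A : Set (MvPolynomial (Fin n) ℝ)) : Set (MvPolynomial (Fin n) ℝ) :=
  {P | ∀ ε > (0:ℝ), ∃ Q ∈ A, polyNorm (P - Q) < ε}

/-- `Σ(r,s,m)`: the closure of the set of `s`-vanishing polynomials. -/
def SigmaCl (r s m : ℕ) : Set (MvPolynomial (Fin m) ℝ) :=
  closureNorm (sigmaSet r s m)

/-- The restriction `x ↦ Q(Ax)` of `Q` to the span of the columns of `A`. -/
def restrictPoly {n m : ℕ} (A : Matrix (Fin n) (Fin m) ℝ) (Q : MvPolynomial (Fin n) ℝ) :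
    MvPolynomial (Fin m) ℝ :=
  aeval (fun i : Fin n => ∑ j : Fin m, C (A i j) * X j) Q

/-- The bad set `𝒱(r,s,m,n)`: polynomials of `𝒫*(r,n)` whose restriction to the span of
the (orthonormal) columns of some matrix `A` lies in `Σ(r,s,m)`. -/
def badV (r s m n : ℕ) : Set (MvPolynomial (Fin n) ℝ) :=
  {Q | Q ∈ PolySpaceStar r n ∧
    ∃ A : Matrix (Fin n) (Fin m) ℝ, Aᵀ * A = 1 ∧ restrictPoly A Q ∈ SigmaCl r s m}

open Filter Topology

section PolyNorm

variable {n : ℕ}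

lemma bddAbove_range_abs_coeff (P : MvPolynomial (Fin n) ℝ) :
    BddAbove (range fun μ => |P.coeff μ|) := by
  refine (((P.support.finite_toSet.image fun μ => |P.coeff μ|).insert 0).subset ?_).bddAbove
  rintro _ ⟨μ, rfl⟩
  by_cases hμ : μ ∈ P.support
  · exact mem_insert_of_mem _ ⟨μ, hμ, rfl⟩
  · simp [notMem_support_iff.mp hμ]

lemma abs_coeff_le_polyNorm (P : MvPolynomial (Fin n) ℝ) (μ : Fin n →₀ ℕ) :
    |P.coeff μ| ≤ polyNorm P :=
  le_ciSup (bddAbove_range_abs_coeff P) μ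

lemma polyNorm_le {P : MvPolynomial (Fin n) ℝ} {c : ℝ} (h : ∀ μ, |P.coeff μ| ≤ c) :
    polyNorm P ≤ c :=
  ciSup_le h

lemma polyNorm_sub_le (P Q R : MvPolynomial (Fin n) ℝ) :
    polyNorm (P - R) ≤ polyNorm (P - Q) + polyNorm (Q - R) :=
  polyNorm_le fun μ => calc
    |(P - R).coeff μ| = |(P - Q).coeff μ + (Q - R).coeff μ| := by
        simp only [coeff_sub, sub_add_sub_cancel]
    _ ≤ polyNorm (P - Q) + polyNorm (Q - R) :=
      (abs_add_le _ _).trans (add_le_add (abs_coeff_le_polyNorm _ _) (abs_coeff_le_polyNorm _ _))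

lemma closureNorm_closureNorm_subset (A : Set (MvPolynomial (Fin n) ℝ)) :
    closureNorm (closureNorm A) ⊆ closureNorm A := by
  intro P hP ε hε
  obtain ⟨Q, hQ, hPQ⟩ := hP (ε / 2) (half_pos hε)
  obtain ⟨R, hR, hQR⟩ := hQ (ε / 2) (half_pos hε)
  exact ⟨R, hR, (polyNorm_sub_le P Q R).trans_lt (by linarith)⟩

lemma tendsto_coeff_of_polyNorm_sub {ι : Type*} {l : Filter ι} {Q : ι → MvPolynomial (Fin n) ℝ}
    {P : MvPolynomial (Fin n) ℝ} (h : ∀ ε > 0, ∀ᶠ k in l, polyNorm (Q k - P) < ε)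
    (μ : Fin n →₀ ℕ) : Tendsto (fun k => (Q k).coeff μ) l (𝓝 (P.coeff μ)) :=
  Metric.tendsto_nhds.2 fun ε hε => (h ε hε).mono fun k hk => by
    rw [Real.dist_eq, ← coeff_sub]
    exact (abs_coeff_le_polyNorm _ μ).trans_lt hk

lemma eventually_polyNorm_sub_lt_of_tendsto_coeff {ι : Type*} {l : Filter ι}
    {Q : ι → MvPolynomial (Fin n) ℝ} {P : MvPolynomial (Fin n) ℝ} {T : Finset (Fin n →₀ ℕ)}
    (hQT : ∀ k, (Q k).support ⊆ T) (hPT : P.support ⊆ T)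
    (h : ∀ μ, Tendsto (fun k => (Q k).coeff μ) l (𝓝 (P.coeff μ))) :
    ∀ ε > 0, ∀ᶠ k in l, polyNorm (P - Q k) < ε := by
  intro ε hε
  have hT : ∀ᶠ k in l, ∀ μ ∈ T, |(P - Q k).coeff μ| < ε / 2 :=
    (eventually_all_finset T).2 fun μ _ => (Metric.tendsto_nhds.1 (h μ) _ (half_pos hε)).mono
      fun k hk => by rwa [coeff_sub, abs_sub_comm, ← Real.dist_eq]
  refine hT.mono fun k hk => (polyNorm_le fun μ => ?_).trans_lt (half_lt_self hε)
  by_cases hμ : μ ∈ T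
  · exact (hk μ hμ).le
  · rw [coeff_sub, notMem_support_iff.1 fun h => hμ (hPT h),
      notMem_support_iff.1 fun h => hμ (hQT k h)]
    simpa using (half_pos hε).le

end PolyNorm

section Substitution

variable {σ τ R : Type*} [CommSemiring R]

lemma support_subset_Iic_of_totalDegree_le [Fintype σ] [DecidableEq σ] {P : MvPolynomial σ R}
    {r : ℕ} (h : P.totalDegree ≤ r) :
    P.support ⊆ Finset.Iic (Finsupp.equivFunOnFinite.symm fun _ => r) := fun _ hμ =>
  Finset.mem_Iic.2 fun i =>
    ((le_degreeOf_of_mem_support i hμ).trans (degreeOf_le_totalDegree P i)).trans h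

lemma totalDegree_aeval_le {f : σ → MvPolynomial τ R} (hf : ∀ i, (f i).totalDegree ≤ 1)
    (P : MvPolynomial σ R) : (aeval f P).totalDegree ≤ P.totalDegree := by
  conv_lhs => rw [P.as_sum]
  rw [map_sum]
  refine (totalDegree_finsetSum _ _).trans (Finset.sup_le fun μ hμ => ?_)
  rw [aeval_monomial, algebraMap_eq, Finsupp.prod]
  refine (totalDegree_mul _ _).trans ?_
  rw [totalDegree_C, zero_add]
  calc (∏ i ∈ μ.support, f i ^ μ i).totalDegree
      ≤ ∑ i ∈ μ.support, (f i ^ μ i).totalDegree := totalDegree_finsetProd _ _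
    _ ≤ ∑ i ∈ μ.support, μ i := Finset.sum_le_sum fun i _ =>
      (totalDegree_pow _ _).trans (by simpa using Nat.mul_le_mul_left (μ i) (hf i))
    _ ≤ P.totalDegree := le_totalDegree hμ

lemma coeff_aeval_eq_sum {f : σ → MvPolynomial τ R} {P : MvPolynomial σ R}
    {S : Finset (σ →₀ ℕ)} (hS : P.support ⊆ S) (ν : τ →₀ ℕ) :
    (aeval f P).coeff ν = ∑ μ ∈ S, P.coeff μ * (aeval f (monomial μ (1 : R))).coeff ν := by
  have hP : P = ∑ μ ∈ S, P.coeff μ • monomial μ (1 : R) := by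
    conv_lhs => rw [P.as_sum]
    refine (Finset.sum_subset hS fun μ _ hμ => ?_).trans (Finset.sum_congr rfl fun μ _ => ?_)
    · rw [notMem_support_iff.1 hμ, monomial_zero]
    · rw [smul_monomial, smul_eq_mul, mul_one]
  conv_lhs => rw [hP]
  simp only [map_sum, map_smul, coeff_sum, coeff_smul, smul_eq_mul]

variable [TopologicalSpace R] [IsTopologicalSemiring R]

lemma continuous_coeff_aeval {X : Type*} [TopologicalSpace X] {f : X → σ → MvPolynomial τ R}
    (hf : ∀ i ν, Continuous fun x => (f x i).coeff ν) (P : MvPolynomial σ R) (ν : τ →₀ ℕ) :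
    Continuous fun x => (aeval (f x) P).coeff ν := by
  classical
  induction P using MvPolynomial.induction_on generalizing ν with
  | C a => simpa only [aeval_C, algebraMap_eq, coeff_C] using continuous_const
  | add p q hp hq =>
    simp only [map_add, coeff_add]
    exact (hp ν).add (hq ν)
  | mul_X p i hp =>
    simp only [_root_.map_mul, aeval_X, coeff_mul]
    exact continuous_finsetSum _ fun x _ => (hp x.1).mul (hf i x.2)

end Substitution

section Restriction

variable {n m : ℕ}

lemma totalDegree_restrictPoly_le (A : Matrix (Fin n) (Fin m) ℝ) (P : MvPolynomial (Fin n) ℝ) :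
    (restrictPoly A P).totalDegree ≤ P.totalDegree :=
  totalDegree_aeval_le (fun i => (totalDegree_finsetSum _ _).trans <| Finset.sup_le fun j _ =>
    (totalDegree_mul _ _).trans (by simp [totalDegree_C, totalDegree_X])) P

lemma tendsto_coeff_restrictPoly {ι : Type*} {l : Filter ι} {A : ι → Matrix (Fin n) (Fin m) ℝ}
    {B : Matrix (Fin n) (Fin m) ℝ} (hA : Tendsto A l (𝓝 B)) {Q : ι → MvPolynomial (Fin n) ℝ}
    {P : MvPolynomial (Fin n) ℝ} {S : Finset (Fin n →₀ ℕ)} (hQS : ∀ k, (Q k).support ⊆ S)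
    (hPS : P.support ⊆ S) (hQ : ∀ μ, Tendsto (fun k => (Q k).coeff μ) l (𝓝 (P.coeff μ)))
    (ν : Fin m →₀ ℕ) :
    Tendsto (fun k => (restrictPoly (A k) (Q k)).coeff ν) l (𝓝 ((restrictPoly B P).coeff ν)) := by
  have hlin : ∀ i ν, Continuous fun A : Matrix (Fin n) (Fin m) ℝ =>
      (∑ j, C (A i j) * X j : MvPolynomial (Fin m) ℝ).coeff ν := by
    intro i ν
    simp only [coeff_sum, coeff_C_mul]
    fun_prop
  simp only [restrictPoly, coeff_aeval_eq_sum (hQS _), coeff_aeval_eq_sum hPS]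
  exact tendsto_finsetSum _ fun μ _ =>
    (hQ μ).mul (((continuous_coeff_aeval hlin _ ν).tendsto B).comp hA)

end Restriction

section OrthonormalFrames

variable {n m : ℕ}

lemma abs_le_one_of_transpose_mul_self_eq_one {A : Matrix (Fin n) (Fin m) ℝ} (hA : Aᵀ * A = 1)
    (i : Fin n) (j : Fin m) : |A i j| ≤ 1 := by
  have hcol : ∑ i', A i' j * A i' j = 1 := by
    simpa [mul_apply, one_apply] using congrFun (congrFun hA j) j
  refine abs_le_one_iff_mul_self_le_one.2 (hcol ▸ ?_)
  exact Finset.single_le_sum (fun i' _ => mul_self_nonneg (A i' j)) (Finset.mem_univ i)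

lemma isCompact_setOf_transpose_mul_self_eq_one :
    IsCompact {A : Matrix (Fin n) (Fin m) ℝ | Aᵀ * A = 1} := by
  have hbox : IsCompact (univ.pi fun _ : Fin n => univ.pi fun _ : Fin m => Icc (-1 : ℝ) 1) :=
    isCompact_univ_pi fun _ => isCompact_univ_pi fun _ => isCompact_Icc
  refine hbox.of_isClosed_subset (isClosed_eq (by fun_prop) continuous_const) fun A hA => ?_
  exact mem_univ_pi.2 fun i => mem_univ_pi.2 fun j =>
    abs_le.1 (abs_le_one_of_transpose_mul_self_eq_one hA i j)

lemma exists_strictMono_tendsto_of_transpose_mul_self_eq_one {A : ℕ → Matrix (Fin n) (Fin m) ℝ}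
    (hA : ∀ k, (A k)ᵀ * A k = 1) :
    ∃ B : Matrix (Fin n) (Fin m) ℝ, Bᵀ * B = 1 ∧
      ∃ φ : ℕ → ℕ, StrictMono φ ∧ Tendsto (A ∘ φ) atTop (𝓝 B) :=
  haveI : FirstCountableTopology (Matrix (Fin n) (Fin m) ℝ) :=
    inferInstanceAs (FirstCountableTopology (Fin n → Fin m → ℝ))
  isCompact_setOf_transpose_mul_self_eq_one.tendsto_subseq hA

end OrthonormalFrames

theorem statement1_general (r n m s : ℕ)
    (Q : ℕ → MvPolynomial (Fin n) ℝ) (hQ : ∀ k, Q k ∈ badV r s m n)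
    (Qbar : MvPolynomial (Fin n) ℝ) (hQbar : Qbar ∈ PolySpace r n)
    (hconv : ∀ ε > (0:ℝ), ∃ N, ∀ k ≥ N, polyNorm (Q k - Qbar) < ε)
    (hgrad : polyGrad Qbar 0 ≠ 0) :
    Qbar ∈ badV r s m n := by
  choose A hA_orth hA_mem using fun k => (hQ k).2
  obtain ⟨B, hB_orth, φ, hφ, hAB⟩ :=
    exists_strictMono_tendsto_of_transpose_mul_self_eq_one hA_orth
  refine ⟨⟨hQbar, hgrad⟩, B, hB_orth, closureNorm_closureNorm_subset _ fun ε hε => ?_⟩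
  have hQ_coeff := tendsto_coeff_of_polyNorm_sub fun ε hε => eventually_atTop.2 (hconv ε hε)
  have hdeg : ∀ k, (Q k).totalDegree ≤ r := fun k => (hQ k).1.1.2
  have hR_coeff := tendsto_coeff_restrictPoly hAB
    (fun k => support_subset_Iic_of_totalDegree_le (hdeg (φ k)))
    (support_subset_Iic_of_totalDegree_le hQbar.2) fun μ => (hQ_coeff μ).comp hφ.tendsto_atTop
  obtain ⟨k, hk⟩ := (eventually_polyNorm_sub_lt_of_tendsto_coeff
    (fun k => support_subset_Iic_of_totalDegree_le
      ((totalDegree_restrictPoly_le _ _).trans (hdeg (φ k))))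
    (support_subset_Iic_of_totalDegree_le ((totalDegree_restrictPoly_le _ _).trans hQbar.2))
    hR_coeff ε hε).exists
  exact ⟨_, hA_mem (φ k), hk⟩

/-- Closedness of the bad set `𝒱(r,s,m,n)` in `𝒫*(r,n)`. -/
theorem statement1 (r n m s : ℕ) (hr : 2 ≤ r) (hn : 2 ≤ n)
    (hm : 1 ≤ m ∧ m ≤ n - 1) (hs : 1 ≤ s ∧ s ≤ r - 1)
    (Q : ℕ → MvPolynomial (Fin n) ℝ) (hQ : ∀ k, Q k ∈ badV r s m n)
    (Qbar : MvPolynomial (Fin n) ℝ) (hQbar : Qbar ∈ PolySpace r n)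
    (hconv : ∀ ε > (0:ℝ), ∃ N, ∀ k ≥ N, polyNorm (Q k - Qbar) < ε)
    (hgrad : polyGrad Qbar 0 ≠ 0) :
    Qbar ∈ badV r s m n :=
  statement1_general r n m s Q hQ Qbar hQbar hconv hgrad

end
end

section
/- (Theorem B, part (i): explicit criterion for steepness on one-dimensional subspaces.) Let r ≥ 2 and n ≥ 2 be integers, s₁ ∈ {1,…,r−1}, I₀ ∈ ℝⁿ and ϱ > 0. Let h be of class C^{2r−1} on the closed ball B̄(I₀,ϱ) with ‖h‖_{C^{2r−1}(B̄(I₀,ϱ))} < ∞ and ∇h(I₀) ≠ 0. Assume that there is no unit vector w ∈ ℝⁿ satisfying h¹_{I₀}[w] = h²_{I₀}[w,w] = ⋯ = h^{s₁+1}_{I₀}[w,…,w] = 0. Then there exist R > 0, C₁ > 0 and δ > 0 such that ∇h(I) ≠ 0 for every I ∈ B(I₀,R), and for every I ∈ B(I₀,R) and every one-dimensional linear subspace Γ ⊆ ℝⁿ orthogonal to ∇h(I), the steepness inequality holds at I on Γ with coefficients C₁, δ and index s₁. -/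
/-!
Along a unit direction `w`, Taylor's formula writes `a ↦ ∂_w h(I + a w)` as the polynomial
`∑_{j ≤ s} h^{j+1}_I[w, …, w] a^j / j!` up to an error `O(|a|^{s+1})`. Nondegeneracy of the jet
at `I₀` and compactness of the unit sphere bound the coefficient vector of this polynomial below,
uniformly for `I` near `I₀`. Since a nonzero polynomial of degree `≤ s` cannot vanish at one of
`±τᵢ` for each of `s + 1` distinct nodes `τᵢ`, a second compactness argument gives a fixed
`κ > 0` and, for every coefficient vector `b`, some `t ∈ [0, 1]` at which the polynomial with
coefficients `b` has absolute value `≥ κ ‖b‖` at both `t` and `-t`.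
Rescaling `a = ± t ξ` then yields `|∂_w h(I ± t ξ w)| ≳ ξ^s` once `ξ` is small enough to absorb
the remainder. On a line `Γ = ℝ w` this derivative is `⟪∇h, w⟫`, which is bounded by the norm of
the projection of `∇h` onto `Γ`.
-/

open Metric Set
open scoped RealInnerProductSpace

noncomputable section

/-- The steepness inequality at `I` on `Γ` with coefficients `C, δ` and index `α`:
for every `ξ ∈ (0,δ]`,
`max_{η∈[0,ξ]} min_{u∈Γ, ‖u‖=η} ‖π_Γ ∇f(I+u)‖ > C ξ^α`,
where `π_Γ` is the orthogonal projection onto `Γ`. -/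
def SteepAt {n : ℕ} (f : EuclideanSpace ℝ (Fin n) → ℝ) (I : EuclideanSpace ℝ (Fin n))
    (Γ : Submodule ℝ (EuclideanSpace ℝ (Fin n))) (C δ α : ℝ) : Prop :=
  ∀ ξ ∈ Set.Ioc (0:ℝ) δ, ∃ η ∈ Set.Icc (0:ℝ) ξ, ∀ u ∈ Γ, ‖u‖ = η →
    C * ξ ^ α < ‖(Submodule.orthogonalProjectionOnto Γ (gradient f (I + u)) : EuclideanSpace ℝ (Fin n))‖

/-- `‖f‖_{C^q(D)} ≤ M`, formulated with iterated Fréchet derivatives. -/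
def CqNormLe {n : ℕ} (q : ℕ) (f : EuclideanSpace ℝ (Fin n) → ℝ)
    (D : Set (EuclideanSpace ℝ (Fin n))) (M : ℝ) : Prop :=
  ∀ k ≤ q, ∀ x ∈ D, ‖iteratedFDerivWithin ℝ k f D x‖ ≤ M

open Filter Topology
open scoped Nat

theorem exists_eval_ne_zero_and_eval_neg_ne_zero {s : ℕ} {τ : Fin (s + 1) → ℝ}
    (hτ : Function.Injective fun i => |τ i|) {b : Fin (s + 1) → ℝ} (hb : b ≠ 0) :
    ∃ i, ∑ j, b j * τ i ^ (j : ℕ) ≠ 0 ∧ ∑ j, b j * (-τ i) ^ (j : ℕ) ≠ 0 := by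
  by_contra! hroot
  set r : Fin (s + 1) → ℝ := fun i => if ∑ j, b j * τ i ^ (j : ℕ) = 0 then τ i else -τ i
  have hr : Function.Injective r := by
    refine fun i i' hii' => hτ ?_
    have habs : ∀ i, |r i| = |τ i| := fun i => by unfold r; split_ifs <;> simp
    simpa only [habs] using congrArg abs hii'
  have hvanish : (Matrix.vandermonde r).mulVec b = 0 := by
    ext i
    simp only [Matrix.mulVec, dotProduct, Matrix.vandermonde_apply, Pi.zero_apply,
      mul_comm _ (b _)]
    unfold r
    split_ifs with h
    · exact h
    · exact hroot i h
  exact hb (Matrix.eq_zero_of_mulVec_eq_zero (Matrix.det_vandermonde_ne_zero_iff.2 hr) hvanish)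

theorem exists_pos_mul_norm_le_abs_eval_and_eval_neg (s : ℕ) :
    ∃ κ > 0, ∀ b : Fin (s + 1) → ℝ, ∃ t ∈ Icc (0 : ℝ) 1,
      κ * ‖b‖ ≤ |∑ j, b j * t ^ (j : ℕ)| ∧ κ * ‖b‖ ≤ |∑ j, b j * (-t) ^ (j : ℕ)| := by
  -- any `s + 1` nodes with pairwise distinct absolute values would do
  set τ : Fin (s + 1) → ℝ := fun i => ((i : ℕ) + 1 : ℝ)⁻¹
  have hτ_pos : ∀ i, 0 < τ i := fun i => by positivity
  have hτ : Function.Injective fun i => |τ i| := fun i i' hii' => by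
    simpa [abs_of_pos (hτ_pos _), τ, Fin.val_inj] using hii'
  set p : (Fin (s + 1) → ℝ) → ℝ → ℝ := fun b x => ∑ j, b j * x ^ (j : ℕ)
  set N : (Fin (s + 1) → ℝ) → ℝ :=
    fun b => Finset.univ.sup' Finset.univ_nonempty fun i => min |p b (τ i)| |p b (-τ i)|
  have hN : Continuous N := Continuous.finset_sup'_apply _ fun i _ => by fun_prop
  obtain ⟨κ, hκ, hκN⟩ := (isCompact_sphere (0 : Fin (s + 1) → ℝ) 1).exists_forall_le'
    hN.continuousOn (a := 0) fun b hb => by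
      obtain ⟨i, hi, hi'⟩ :=
        exists_eval_ne_zero_and_eval_neg_ne_zero hτ (ne_zero_of_mem_unit_sphere ⟨b, hb⟩)
      exact (Finset.lt_sup'_iff _).2
        ⟨i, Finset.mem_univ i, lt_min (abs_pos.2 hi) (abs_pos.2 hi')⟩
  refine ⟨κ, hκ, fun b => ?_⟩
  rcases eq_or_ne b 0 with rfl | hb
  · exact ⟨0, ⟨le_rfl, zero_le_one⟩, by simp⟩
  set b' := ‖b‖⁻¹ • b
  have hscale : ∀ x, κ ≤ |p b' x| → κ * ‖b‖ ≤ |p b x| := fun x hx => by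
    have : p b x = ‖b‖ * p b' x := by
      simp only [p, b', Pi.smul_apply, smul_eq_mul, Finset.mul_sum]
      field_simp
    rw [this, abs_mul, abs_norm, mul_comm]
    gcongr
  obtain ⟨i, -, hi⟩ :=
    Finset.exists_mem_eq_sup' Finset.univ_nonempty fun i => min |p b' (τ i)| |p b' (-τ i)|
  have hκi : κ ≤ min |p b' (τ i)| |p b' (-τ i)| := hi ▸ hκN b' (by simp [b', norm_smul, hb])
  exact ⟨τ i, ⟨(hτ_pos i).le, inv_le_one_of_one_le₀ (by simp)⟩,
    hscale _ (hκi.trans (min_le_left _ _)), hscale _ (hκi.trans (min_le_right _ _))⟩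

theorem norm_mul_pow_div_factorial_le {s : ℕ} (x : Fin (s + 1) → ℝ) {ξ : ℝ} (hξ0 : 0 < ξ)
    (hξ1 : ξ ≤ 1) : ‖x‖ * ξ ^ s / s ! ≤ ‖fun j : Fin (s + 1) => x j / (j : ℕ)! * ξ ^ (j : ℕ)‖ := by
  rw [div_le_iff₀ (by positivity), ← le_div_iff₀ (by positivity)]
  refine (pi_norm_le_iff_of_nonneg (by positivity)).2 fun j => ?_
  rw [Real.norm_eq_abs, le_div_iff₀ (by positivity)]
  have hj : (j : ℕ) ≤ s := Nat.lt_succ_iff.1 j.2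
  calc |x j| * ξ ^ s ≤ |x j| * ξ ^ (j : ℕ) :=
        mul_le_mul_of_nonneg_left (pow_le_pow_of_le_one hξ0.le hξ1 hj) (abs_nonneg _)
    _ = |x j / (j : ℕ)! * ξ ^ (j : ℕ)| * (j : ℕ)! := by
      rw [abs_mul, abs_div, abs_pow, abs_of_pos hξ0, Nat.abs_cast]
      field_simp
    _ ≤ ‖fun j : Fin (s + 1) => x j / (j : ℕ)! * ξ ^ (j : ℕ)‖ * s ! := by
      gcongr
      exact norm_le_pi_norm (fun j : Fin (s + 1) => x j / (j : ℕ)! * ξ ^ (j : ℕ)) j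

theorem exists_pos_forall_exists_le_abs_taylor (s : ℕ) :
    ∃ κ > 0, ∀ (x : Fin (s + 1) → ℝ) (ξ : ℝ), 0 < ξ → ξ ≤ 1 → ∃ η ∈ Icc 0 ξ, ∀ a : ℝ,
      |a| = η → κ * ‖x‖ * ξ ^ s ≤ |∑ j, x j / (j : ℕ)! * a ^ (j : ℕ)| := by
  obtain ⟨κ, hκ, hκb⟩ := exists_pos_mul_norm_le_abs_eval_and_eval_neg s
  refine ⟨κ / s !, by positivity, fun x ξ hξ0 hξ1 => ?_⟩
  set b : Fin (s + 1) → ℝ := fun j => x j / (j : ℕ)! * ξ ^ (j : ℕ)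
  have hsum : ∀ t : ℝ, ∑ j, x j / (j : ℕ)! * (t * ξ) ^ (j : ℕ) = ∑ j, b j * t ^ (j : ℕ) :=
    fun t => Finset.sum_congr rfl fun j _ => by simp only [b]; ring
  have hb : κ / s ! * ‖x‖ * ξ ^ s ≤ κ * ‖b‖ := by
    rw [mul_assoc, div_mul_eq_mul_div, mul_div_assoc]
    gcongr
    exact norm_mul_pow_div_factorial_le x hξ0 hξ1
  obtain ⟨t, ⟨ht0, ht1⟩, hpos, hneg⟩ := hκb b
  refine ⟨t * ξ, ⟨by positivity, mul_le_of_le_one_left hξ0.le ht1⟩, fun a ha => ?_⟩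
  rcases (abs_eq (by positivity)).1 ha with rfl | rfl
  · rw [hsum]; exact hb.trans hpos
  · rw [← neg_mul, hsum]; exact hb.trans hneg

section Line

variable {E : Type*} [NormedAddCommGroup E] [NormedSpace ℝ E] {h : E → ℝ} {U : Set E}
  {I I₀ w : E} {s : ℕ}

def lineJet (h : E → ℝ) (s : ℕ) (I w : E) : Fin (s + 1) → ℝ :=
  fun j => iteratedFDeriv ℝ (j + 1) h I fun _ => w

theorem lineJet_zero : lineJet h s I w 0 = fderiv ℝ h I w :=
  iteratedFDeriv_one_apply _

theorem lineJet_eq_zero_iff : lineJet h s I w = 0 ↔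
    ∀ k, 1 ≤ k → k ≤ s + 1 → iteratedFDeriv ℝ k h I (fun _ => w) = 0 := by
  refine ⟨fun h0 k hk1 hk2 => ?_, fun hall => funext fun j => hall _ (by omega) (by omega)⟩
  obtain ⟨j, rfl⟩ : ∃ j : Fin (s + 1), k = j + 1 :=
    ⟨⟨k - 1, by omega⟩, (Nat.sub_add_cancel hk1).symm⟩
  exact congrFun h0 j

theorem continuousOn_lineJet (hU : IsOpen U) (hh : ContDiffOn ℝ (s + 1) h U) :
    ContinuousOn (fun p : E × E => lineJet h s p.1 p.2) (U ×ˢ univ) := by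
  refine continuousOn_pi.2 fun j => ?_
  have hc : ContinuousOn (iteratedFDeriv ℝ (j + 1) h) U :=
    ContinuousOn.continuousOn_iteratedFDeriv hh hU (by norm_cast; omega)
  exact continuous_eval.comp_continuousOn ((hc.comp continuousOn_fst fun p hp => hp.1).prodMk
    (continuous_pi fun _ => continuous_snd).continuousOn)

theorem exists_pos_eventually_le_norm_lineJet [FiniteDimensional ℝ E] (hU : IsOpen U)
    (hI₀ : I₀ ∈ U) (hh : ContDiffOn ℝ (s + 1) h U)
    (hjet : ∀ w, ‖w‖ = 1 → lineJet h s I₀ w ≠ 0) :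
    ∃ c > 0, ∀ᶠ I in 𝓝 I₀, ∀ w, ‖w‖ = 1 → c ≤ ‖lineJet h s I w‖ := by
  have hF : ∀ w, ContinuousAt (fun p : E × E => ‖lineJet h s p.1 p.2‖) (I₀, w) := fun w =>
    ((continuousOn_lineJet hU hh).continuousAt
      ((hU.prod isOpen_univ).mem_nhds ⟨hI₀, trivial⟩)).norm
  obtain ⟨c, hc, hcle⟩ := (isCompact_sphere (0 : E) 1).exists_forall_le' (a := 0)
    (f := fun w => ‖lineJet h s I₀ w‖)
    (fun w _ => ((hF w).comp (Continuous.prodMk_right I₀).continuousAt).continuousWithinAt)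
    fun w hw => norm_pos_iff.2 (hjet w (by simpa using hw))
  refine ⟨c / 2, half_pos hc, ?_⟩
  have hev := (isCompact_sphere (0 : E) 1).eventually_forall_of_forall_eventually
    (P := fun I w => c / 2 < ‖lineJet h s I w‖)
    fun w hw => continuousAt_const.eventually_lt (hF w) (by linarith [hcle w hw])
  filter_upwards [hev] with I hI w hw using (hI w (by simpa using hw)).le

theorem hasDerivAt_iteratedFDeriv_line {k : ℕ} (hU : IsOpen U) (hh : ContDiffOn ℝ (k + 1) h U)
    {t : ℝ} (ht : I + t • w ∈ U) :
    HasDerivAt (fun t : ℝ => iteratedFDeriv ℝ k h (I + t • w) fun _ => w)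
      (iteratedFDeriv ℝ (k + 1) h (I + t • w) fun _ => w) t := by
  have hdiff : DifferentiableAt ℝ (iteratedFDeriv ℝ k h) (I + t • w) :=
    (hh.contDiffAt (hU.mem_nhds ht)).differentiableAt_iteratedFDeriv (by norm_cast; omega)
  have hline : HasDerivAt (fun t : ℝ => I + t • w) w t := by
    simpa using ((hasDerivAt_id t).smul_const w).const_add I
  rw [iteratedFDeriv_succ_apply_left]
  exact (hdiff.hasFDerivAt.continuousMultilinear_apply_const _).comp_hasDerivAt t hline

theorem iteratedDeriv_fderiv_line {k : ℕ} (hU : IsOpen U) (hh : ContDiffOn ℝ (k + 1) h U)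
    {t : ℝ} (ht : I + t • w ∈ U) :
    iteratedDeriv k (fun t : ℝ => fderiv ℝ h (I + t • w) w) t =
      iteratedFDeriv ℝ (k + 1) h (I + t • w) fun _ => w := by
  induction k generalizing t with
  | zero => simp [iteratedFDeriv_one_apply]
  | succ k ih =>
    have hV : IsOpen {t : ℝ | I + t • w ∈ U} := hU.preimage (by fun_prop)
    have heq : iteratedDeriv k (fun t : ℝ => fderiv ℝ h (I + t • w) w) =ᶠ[𝓝 t]
        fun t => iteratedFDeriv ℝ (k + 1) h (I + t • w) fun _ => w :=
      Filter.eventually_of_mem (hV.mem_nhds ht) fun t' ht' =>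
        ih (hh.of_le (by norm_cast; omega)) ht'
    rw [iteratedDeriv_succ, heq.deriv_eq]
    exact (hasDerivAt_iteratedFDeriv_line hU (by exact_mod_cast hh) ht).deriv

theorem abs_fderiv_line_sub_taylor_le {M a : ℝ} (hU : IsOpen U)
    (hh : ContDiffOn ℝ (s + 2) h U) (hw : ‖w‖ = 1) (hseg : ∀ t ∈ uIcc 0 a, I + t • w ∈ U)
    (hM : ∀ t ∈ uIcc 0 a, ‖iteratedFDeriv ℝ (s + 2) h (I + t • w)‖ ≤ M) :
    |fderiv ℝ h (I + a • w) w - ∑ j, lineJet h s I w j / (j : ℕ)! * a ^ (j : ℕ)| ≤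
      M * |a| ^ (s + 1) / (s + 1)! := by
  rcases eq_or_ne a 0 with rfl | ha
  · simp [Fin.sum_univ_succ, lineJet_zero]
  set f : ℝ → ℝ := fun t => fderiv ℝ h (I + t • w) w
  have hV : IsOpen {t : ℝ | I + t • w ∈ U} := hU.preimage (by fun_prop)
  have hf : ContDiffOn ℝ (s + 1) f {t : ℝ | I + t • w ∈ U} :=
    ((hh.fderiv_of_isOpen hU (by norm_cast)).comp
      (by fun_prop : ContDiff ℝ (s + 1) fun t : ℝ => I + t • w).contDiffOn
      fun t ht => ht).clm_apply contDiffOn_const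
  have htaylor : taylorWithinEval f s (uIcc 0 a) 0 a =
      ∑ j, lineJet h s I w j / (j : ℕ)! * a ^ (j : ℕ) := by
    rw [taylor_within_apply, ← Fin.sum_univ_eq_sum_range]
    refine Finset.sum_congr rfl fun j _ => ?_
    rw [iteratedDerivWithin_eq_iteratedDeriv (uniqueDiffOn_uIcc ha.symm)
      ((hf.contDiffAt (hV.mem_nhds (hseg 0 left_mem_uIcc))).of_le (by norm_cast; omega))
      left_mem_uIcc,
      iteratedDeriv_fderiv_line hU (hh.of_le (by norm_cast; omega)) (hseg 0 left_mem_uIcc)]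
    simp [lineJet, div_eq_inv_mul]
    ring
  obtain ⟨x, hx, hrem⟩ := taylor_mean_remainder_lagrange_iteratedDeriv ha.symm (hf.mono hseg)
  have hxU := uIoo_subset_uIcc_self hx
  rw [← htaylor, show fderiv ℝ h (I + a • w) w = f a from rfl, hrem,
    iteratedDeriv_fderiv_line hU hh (hseg x hxU), abs_div, abs_mul, abs_pow, sub_zero,
    Nat.abs_cast]
  gcongr
  calc |iteratedFDeriv ℝ (s + 2) h (I + x • w) fun _ => w|
      ≤ ‖iteratedFDeriv ℝ (s + 2) h (I + x • w)‖ * ∏ _i : Fin (s + 2), ‖w‖ :=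
        (iteratedFDeriv ℝ (s + 2) h (I + x • w)).le_opNorm _
    _ ≤ M := by simpa [hw] using hM x hxU

theorem le_abs_fderiv_line_of_le_abs_taylor {K M ξ a : ℝ} (hU : IsOpen U)
    (hh : ContDiffOn ℝ (s + 2) h U) (hw : ‖w‖ = 1) (hball : closedBall I ξ ⊆ U)
    (hM : ∀ x ∈ closedBall I ξ, ‖iteratedFDeriv ℝ (s + 2) h x‖ ≤ M) (ha : |a| ≤ ξ)
    (hξM : M * ξ ≤ K)
    (hT : 2 * K * ξ ^ s ≤ |∑ j, lineJet h s I w j / (j : ℕ)! * a ^ (j : ℕ)|) :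
    K * ξ ^ s ≤ |fderiv ℝ h (I + a • w) w| := by
  have hseg : ∀ t ∈ uIcc 0 a, I + t • w ∈ closedBall I ξ := fun t ht => by
    have := abs_sub_left_of_mem_uIcc ht
    rw [sub_zero, sub_zero] at this
    rw [mem_closedBall, dist_eq_norm, add_sub_cancel_left, norm_smul, hw, mul_one,
      Real.norm_eq_abs]
    exact this.trans ha
  have hξ0 : 0 ≤ ξ := (abs_nonneg a).trans ha
  have hM0 : 0 ≤ M := (norm_nonneg _).trans (hM I (mem_closedBall_self hξ0))
  have hrem : M * |a| ^ (s + 1) / (s + 1)! ≤ K * ξ ^ s :=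
    calc M * |a| ^ (s + 1) / (s + 1)! ≤ M * ξ ^ (s + 1) / (s + 1)! := by gcongr
      _ ≤ M * ξ ^ (s + 1) :=
        div_le_self (by positivity) (mod_cast Nat.one_le_of_lt (Nat.factorial_pos _))
      _ = M * ξ * ξ ^ s := by ring
      _ ≤ K * ξ ^ s := by gcongr
  have htaylor := abs_fderiv_line_sub_taylor_le hU hh hw (fun t ht => hball (hseg t ht))
    fun t ht => hM _ (hseg t ht)
  have htri := abs_sub_abs_le_abs_sub (∑ j, lineJet h s I w j / (j : ℕ)! * a ^ (j : ℕ))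
    (fderiv ℝ h (I + a • w) w)
  rw [abs_sub_comm] at htri
  linarith

theorem exists_eventually_lt_abs_fderiv_line [FiniteDimensional ℝ E] (hU : IsOpen U)
    (hI₀ : I₀ ∈ U) (hh : ContDiffOn ℝ (s + 2) h U)
    (hjet : ∀ w, ‖w‖ = 1 → lineJet h s I₀ w ≠ 0) :
    ∃ C > 0, ∃ δ > 0, ∀ᶠ I in 𝓝 I₀, ∀ w, ‖w‖ = 1 → ∀ ξ ∈ Ioc 0 δ,
      ∃ η ∈ Icc 0 ξ, ∀ a : ℝ, |a| = η → C * ξ ^ s < |fderiv ℝ h (I + a • w) w| := by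
  obtain ⟨c, hc, hjet_ev⟩ :=
    exists_pos_eventually_le_norm_lineJet hU hI₀ (hh.of_le (by norm_cast; omega)) hjet
  obtain ⟨ρ, hρ, hρU⟩ := Metric.eventually_nhds_iff_ball.1 (hjet_ev.and (hU.mem_nhds hI₀))
  have hsub : closedBall I₀ (ρ / 2) ⊆ U := fun x hx =>
    (hρU x (closedBall_subset_ball (by linarith) hx)).2
  obtain ⟨M, hM⟩ := (isCompact_closedBall I₀ (ρ / 2)).exists_bound_of_continuousOn
    ((ContinuousOn.continuousOn_iteratedFDeriv hh hU le_rfl).mono hsub)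
  have hM0 : 0 ≤ M := (norm_nonneg _).trans (hM I₀ (mem_closedBall_self (by positivity)))
  obtain ⟨κ, hκ, hκT⟩ := exists_pos_forall_exists_le_abs_taylor s
  set K := κ * c / 2
  have hK : 0 < K := by positivity
  refine ⟨K / 2, half_pos hK, min (ρ / 4) (min 1 (K / (M + 1))), by positivity, ?_⟩
  filter_upwards [ball_mem_nhds I₀ (by positivity : 0 < ρ / 4)] with I hI w hw ξ ⟨hξ0, hξδ⟩
  have hξρ : ξ ≤ ρ / 4 := hξδ.trans (min_le_left _ _)
  have hξ1 : ξ ≤ 1 := hξδ.trans ((min_le_right _ _).trans (min_le_left _ _))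
  have hξM : M * ξ ≤ K := by
    have : ξ ≤ K / (M + 1) := hξδ.trans ((min_le_right _ _).trans (min_le_right _ _))
    rw [le_div_iff₀ (by positivity)] at this
    nlinarith
  have hball : closedBall I ξ ⊆ closedBall I₀ (ρ / 2) :=
    closedBall_subset_closedBall' (by rw [mem_ball] at hI; linarith)
  have hcI : c ≤ ‖lineJet h s I w‖ := (hρU I (ball_subset_ball (by linarith) hI)).1 w hw
  obtain ⟨η, hη, hT⟩ := hκT (lineJet h s I w) ξ hξ0 hξ1
  refine ⟨η, hη, fun a ha => ?_⟩
  have hξs : 0 < ξ ^ s := pow_pos hξ0 s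
  have hT' : 2 * K * ξ ^ s ≤ |∑ j, lineJet h s I w j / (j : ℕ)! * a ^ (j : ℕ)| :=
    calc 2 * K * ξ ^ s = κ * c * ξ ^ s := by ring
      _ ≤ κ * ‖lineJet h s I w‖ * ξ ^ s := by gcongr
      _ ≤ _ := hT a ha
  refine lt_of_lt_of_le (by nlinarith) (le_abs_fderiv_line_of_le_abs_taylor hU hh hw
    (hball.trans hsub) (fun x hx => hM x (hball hx)) (ha ▸ hη.2) hξM hT')

end Line

theorem Submodule.exists_norm_eq_one_forall_mem_eq_smul {E : Type*} [NormedAddCommGroup E]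
    [NormedSpace ℝ E] {Γ : Submodule ℝ E} (hΓ : Module.finrank ℝ Γ = 1) :
    ∃ w ∈ Γ, ‖w‖ = 1 ∧ ∀ u ∈ Γ, ∃ a : ℝ, u = a • w := by
  obtain ⟨v, hv, hspan⟩ := finrank_eq_one_iff'.1 hΓ
  have hv' : ‖(v : E)‖ ≠ 0 := by simpa using hv
  refine ⟨‖(v : E)‖⁻¹ • (v : E), Γ.smul_mem _ v.2, by simp [norm_smul, hv'], fun u hu => ?_⟩
  obtain ⟨a, ha⟩ := hspan ⟨u, hu⟩
  refine ⟨a * ‖(v : E)‖, ?_⟩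
  rw [mul_smul, smul_inv_smul₀ hv']
  exact (congrArg Subtype.val ha).symm

theorem eventually_gradient_ne_zero {F : Type*} [NormedAddCommGroup F] [InnerProductSpace ℝ F]
    [CompleteSpace F] {h : F → ℝ} {U : Set F} {I₀ : F} (hU : IsOpen U) (hI₀ : I₀ ∈ U)
    (hh : ContDiffOn ℝ 1 h U) (hgrad : gradient h I₀ ≠ 0) :
    ∀ᶠ I in 𝓝 I₀, gradient h I ≠ 0 :=
  (((InnerProductSpace.toDual ℝ F).symm.continuous.continuousAt).comp
    ((hh.continuousOn_fderiv_of_isOpen hU le_rfl).continuousAt (hU.mem_nhds hI₀))).eventually_ne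
    hgrad

theorem Submodule.abs_inner_le_norm_orthogonalProjectionOnto {F : Type*} [NormedAddCommGroup F]
    [InnerProductSpace ℝ F] (Γ : Submodule ℝ F) [Γ.HasOrthogonalProjection] {w : F}
    (hwΓ : w ∈ Γ) (hw : ‖w‖ = 1) (x : F) : |⟪x, w⟫| ≤ ‖(Γ.orthogonalProjectionOnto x : F)‖ := by
  rw [← Γ.inner_orthogonalProjectionOnto_eq_of_mem_right ⟨w, hwΓ⟩]
  simpa [hw] using abs_real_inner_le_norm (Γ.orthogonalProjectionOnto x) ⟨w, hwΓ⟩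

theorem steepAt_of_finrank_eq_one {n s : ℕ} {h : EuclideanSpace ℝ (Fin n) → ℝ}
    {I : EuclideanSpace ℝ (Fin n)} {Γ : Submodule ℝ (EuclideanSpace ℝ (Fin n))} {C δ : ℝ}
    (hΓ : Module.finrank ℝ Γ = 1)
    (hline : ∀ w : EuclideanSpace ℝ (Fin n), ‖w‖ = 1 → ∀ ξ ∈ Ioc 0 δ, ∃ η ∈ Icc 0 ξ,
      ∀ a : ℝ, |a| = η → C * ξ ^ s < |fderiv ℝ h (I + a • w) w|) :
    SteepAt h I Γ C δ s := by
  obtain ⟨w, hwΓ, hw, hspan⟩ := Submodule.exists_norm_eq_one_forall_mem_eq_smul hΓ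
  intro ξ hξ
  obtain ⟨η, hη, hlow⟩ := hline w hw ξ hξ
  refine ⟨η, hη, fun u hu hun => ?_⟩
  obtain ⟨a, rfl⟩ := hspan u hu
  rw [Real.rpow_natCast]
  calc C * ξ ^ s < |fderiv ℝ h (I + a • w) w| := hlow a (by simpa [norm_smul, hw] using hun)
    _ = |⟪gradient h (I + a • w), w⟫| := by rw [gradient, InnerProductSpace.toDual_symm_apply]
    _ ≤ _ := Γ.abs_inner_le_norm_orthogonalProjectionOnto hwΓ hw _

theorem statement4_general (r n : ℕ) (s₁ : ℕ)
    (hs : 1 ≤ s₁ ∧ s₁ ≤ r - 1)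
    (I₀ : EuclideanSpace ℝ (Fin n)) (ϱ : ℝ) (hϱ : 0 < ϱ)
    (h : EuclideanSpace ℝ (Fin n) → ℝ)
    (hreg : ContDiffOn ℝ (2*r-1 : ℕ) h (closedBall I₀ ϱ))
    (hgrad : gradient h I₀ ≠ 0)
    (hjet : ¬ ∃ w : EuclideanSpace ℝ (Fin n), ‖w‖ = 1 ∧
      ∀ k, 1 ≤ k → k ≤ s₁ + 1 → iteratedFDeriv ℝ k h I₀ (fun _ => w) = 0) :
    ∃ R > (0:ℝ), ∃ C₁ > (0:ℝ), ∃ δ > (0:ℝ),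
      (∀ I ∈ ball I₀ R, gradient h I ≠ 0) ∧
      (∀ I ∈ ball I₀ R, ∀ Γ : Submodule ℝ (EuclideanSpace ℝ (Fin n)),
        Module.finrank ℝ Γ = 1 → (∀ u ∈ Γ, ⟪u, gradient h I⟫ = 0) →
        SteepAt h I Γ C₁ δ (s₁ : ℝ)) := by
  have hh : ContDiffOn ℝ (s₁ + 2) h (ball I₀ ϱ) :=
    (hreg.mono ball_subset_closedBall).of_le (by norm_cast; omega)
  have hI₀ : I₀ ∈ ball I₀ ϱ := mem_ball_self hϱ
  obtain ⟨C₁, hC₁, δ, hδ, hsteep⟩ := exists_eventually_lt_abs_fderiv_line isOpen_ball hI₀ hh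
    fun w hw h0 => hjet ⟨w, hw, lineJet_eq_zero_iff.1 h0⟩
  obtain ⟨R, hR, hball⟩ := Metric.eventually_nhds_iff_ball.1 (hsteep.and
    (eventually_gradient_ne_zero isOpen_ball hI₀ (hh.of_le (by norm_cast; omega)) hgrad))
  exact ⟨R, hR, C₁, hC₁, δ, hδ, fun I hI => (hball I hI).2,
    fun I hI Γ hΓ _ => steepAt_of_finrank_eq_one hΓ (hball I hI).1⟩

/-- Theorem B, part (i): explicit criterion for steepness on one-dimensional subspaces. -/
theorem statement4 (r n : ℕ) (hr : 2 ≤ r) (hn : 2 ≤ n) (s₁ : ℕ)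
    (hs : 1 ≤ s₁ ∧ s₁ ≤ r - 1)
    (I₀ : EuclideanSpace ℝ (Fin n)) (ϱ : ℝ) (hϱ : 0 < ϱ)
    (h : EuclideanSpace ℝ (Fin n) → ℝ)
    (hreg : ContDiffOn ℝ (2*r-1 : ℕ) h (closedBall I₀ ϱ))
    (hbound : ∃ M : ℝ, CqNormLe (2*r-1) h (closedBall I₀ ϱ) M)
    (hgrad : gradient h I₀ ≠ 0)
    (hjet : ¬ ∃ w : EuclideanSpace ℝ (Fin n), ‖w‖ = 1 ∧
      ∀ k, 1 ≤ k → k ≤ s₁ + 1 → iteratedFDeriv ℝ k h I₀ (fun _ => w) = 0) :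
    ∃ R > (0:ℝ), ∃ C₁ > (0:ℝ), ∃ δ > (0:ℝ),
      (∀ I ∈ ball I₀ R, gradient h I ≠ 0) ∧
      (∀ I ∈ ball I₀ R, ∀ Γ : Submodule ℝ (EuclideanSpace ℝ (Fin n)),
        Module.finrank ℝ Γ = 1 → (∀ u ∈ Γ, ⟪u, gradient h I⟫ = 0) →
        SteepAt h I Γ C₁ δ (s₁ : ℝ)) :=
  statement4_general r n s₁ hs I₀ ϱ hϱ h hreg hgrad hjet

end
end

section
/- (Determinantal characterization of degeneracy of a restricted bilinear form.) Let n ≥ 3 and m ∈ {2,…,n−1} be integers, let (e₁,…,e_n) be a basis of ℝⁿ, and let B : ℝⁿ × ℝⁿ → ℝ be a symmetric bilinear form which is diagonal in this basis, i.e., B(e_i,e_j) = 0 for i ≠ j and B(e_i,e_i) = α_i with α_i ≠ 0 for every i. Let I = {i₁ < ⋯ < i_m} ⊆ {1,…,n} with complement J, set E_J := span{e_j : j ∈ J}, fix (w₁,…,w_m) ∈ E_J^m, and set V := span(e_{i₁}+w₁,…,e_{i_m}+w_m). Let M be the m×m matrix with entries M_{ℓℓ'} := B(w_ℓ, w_{ℓ'})/α_{i_ℓ}.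 Then the restriction of B to V is degenerate — i.e., there exists v ∈ V with v ≠ 0 and B(v,x) = 0 for all x ∈ V — if and only if det(M + 𝟙_m) = 0, where 𝟙_m denotes the m×m identity matrix. -/
/-!
The vectors `u ℓ = e_{i_ℓ} + w_ℓ` are linearly independent, so `B` is degenerate on their span
`V` exactly when their Gram matrix `(B (u ℓ) (u ℓ'))` is singular. Since `B` is diagonal in `e`
and each `w_ℓ` lies in the span of the basis vectors outside `I`, the cross terms vanish and the
Gram matrix is `diag(α_{i_ℓ}) * (M + 1)`, whose determinant is a nonzero multiple of `det (M + 1)`.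
-/

open Submodule

namespace LinearMap

variable {R M N P : Type*} [CommSemiring R] [AddCommMonoid M] [AddCommMonoid N] [AddCommMonoid P]
  [Module R M] [Module R N] [Module R P]

theorem apply_eq_zero_of_mem_span_of_mem_span (f : M →ₗ[R] N →ₗ[R] P) {S : Set M} {T : Set N}
    (h : ∀ s ∈ S, ∀ t ∈ T, f s t = 0) {x : M} {y : N} (hx : x ∈ span R S) (hy : y ∈ span R T) :
    f x y = 0 := by
  have hxy := apply_mem_map₂ f hx hy
  rwa [map₂_span_span, span_eq_bot.mpr, mem_bot] at hxy
  rintro _ ⟨s, hs, t, ht, rfl⟩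
  exact h s hs t ht

theorem apply_eq_zero_of_mem_span_image_of_disjoint {ι : Type*} (b : Module.Basis ι R M)
    (f : M →ₗ[R] M →ₗ[R] P) (hf : ∀ i j, i ≠ j → f (b i) (b j) = 0) {s t : Set ι}
    (hst : Disjoint s t) {x y : M} (hx : x ∈ span R (b '' s)) (hy : y ∈ span R (b '' t)) :
    f x y = 0 := by
  refine apply_eq_zero_of_mem_span_of_mem_span f ?_ hx hy
  rintro _ ⟨i, hi, rfl⟩ _ ⟨j, hj, rfl⟩
  exact hf i j (hst.ne_of_mem hi hj)

end LinearMap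

theorem Module.Basis.linearIndependent_add_mem_span_compl {ι R M : Type*} [Semiring R]
    [AddCommMonoid M] [Module R M] (b : Module.Basis ι R M) (s : Finset ι) (w : s → M)
    (hw : ∀ i, w i ∈ span R (b '' (s : Set ι)ᶜ)) : LinearIndependent R fun i : s => b i + w i := by
  classical
  refine LinearIndependent.of_comp (LinearMap.pi fun j : s => b.coord j) ?_
  have hcoord : (LinearMap.pi fun j : s => b.coord j) ∘ (fun i : s => b i + w i) =
      fun i => Pi.single i 1 := by
    ext i j
    have hwj : b.repr (w i) j = 0 :=
      Finsupp.notMem_support_iff.mp fun hj => (b.mem_span_image.mp (hw i) hj) j.2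
    simp only [Function.comp_apply, LinearMap.pi_apply, map_add, Module.Basis.coord_apply, hwj,
      Module.Basis.repr_self, add_zero, Finsupp.single_apply, Pi.single_apply]
    obtain rfl | hij := eq_or_ne i j
    · simp
    · simp [hij, hij.symm]
  rw [hcoord]
  exact Pi.linearIndependent_single_one s R

theorem exists_ne_zero_forall_apply_eq_zero_iff_det_gram_eq_zero {ι R M : Type*} [Fintype ι]
    [DecidableEq ι] [CommRing R] [IsDomain R] [AddCommGroup M] [Module R M]
    (B : M →ₗ[R] M →ₗ[R] R) {u : ι → M}
    (hu : LinearIndependent R u) :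
    (∃ v ∈ span R (Set.range u), v ≠ 0 ∧ ∀ x ∈ span R (Set.range u), B v x = 0) ↔
      (Matrix.of fun i j => B (u i) (u j)).det = 0 := by
  have hcomb (c : ι → R) (j : ι) :
      B (∑ i, c i • u i) (u j) = Matrix.vecMul c (Matrix.of fun i j => B (u i) (u j)) j := by
    simp [Matrix.vecMul, dotProduct, map_sum, smul_eq_mul]
  rw [← Matrix.exists_vecMul_eq_zero_iff]
  constructor
  · rintro ⟨_, hv, hv0, hvB⟩
    obtain ⟨c, rfl⟩ := (mem_span_range_iff_exists_fun R).mp hv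
    refine ⟨c, fun hc => hv0 (by simp [hc]), funext fun j => ?_⟩
    rw [← hcomb]
    exact hvB _ (subset_span ⟨j, rfl⟩)
  · rintro ⟨c, hc0, hc⟩
    refine ⟨∑ i, c i • u i, (mem_span_range_iff_exists_fun R).mpr ⟨c, rfl⟩,
      fun h => hc0 (funext (Fintype.linearIndependent_iff.mp hu c h)), fun x hx => ?_⟩
    suffices span R (Set.range u) ≤ LinearMap.ker (B (∑ i, c i • u i)) from this hx
    rw [span_le]
    rintro _ ⟨j, rfl⟩
    rw [SetLike.mem_coe, LinearMap.mem_ker, hcomb, hc, Pi.zero_apply]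

theorem statement9_general (n : ℕ)
    (e : Module.Basis (Fin n) ℝ (Fin n → ℝ))
    (B : (Fin n → ℝ) →ₗ[ℝ] (Fin n → ℝ) →ₗ[ℝ] ℝ)
    (α : Fin n → ℝ) (hα : ∀ i, α i ≠ 0)
    (hdiag : ∀ i j, i ≠ j → B (e i) (e j) = 0)
    (hdiag2 : ∀ i, B (e i) (e i) = α i)
    (I : Finset (Fin n))
    (w : I → (Fin n → ℝ))
    (hw : ∀ i : I, w i ∈ Submodule.span ℝ (⇑e '' ((↑(Iᶜ) : Set (Fin n)))))
    (V : Submodule ℝ (Fin n → ℝ))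
    (hV : V = Submodule.span ℝ (Set.range fun i : I => e i.1 + w i))
    (M : Matrix I I ℝ) (hM : ∀ ℓ ℓ' : I, M ℓ ℓ' = B (w ℓ) (w ℓ') / α ℓ.1) :
    (∃ v ∈ V, v ≠ 0 ∧ ∀ x ∈ V, B v x = 0) ↔ (M + 1).det = 0 := by
  classical
  rw [Finset.coe_compl] at hw
  have hdisj : Disjoint (I : Set (Fin n)) (I : Set (Fin n))ᶜ := disjoint_compl_right
  have hgram : (Matrix.of fun ℓ ℓ' : I => B (e ℓ + w ℓ) (e ℓ' + w ℓ')) =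
      Matrix.diagonal (fun ℓ : I => α ℓ) * (M + 1) := by
    ext ℓ ℓ'
    have hew : B (e ℓ) (w ℓ') = 0 := B.apply_eq_zero_of_mem_span_image_of_disjoint e hdiag hdisj
      (subset_span ⟨ℓ, ℓ.2, rfl⟩) (hw ℓ')
    have hwe : B (w ℓ) (e ℓ') = 0 := B.apply_eq_zero_of_mem_span_image_of_disjoint e hdiag
      hdisj.symm (hw ℓ) (subset_span ⟨ℓ', ℓ'.2, rfl⟩)
    obtain rfl | hne := eq_or_ne ℓ ℓ'
    · simp [hew, hwe, hdiag2, hM, mul_add, mul_div_cancel₀ _ (hα ℓ), add_comm]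
    · simp [hew, hwe, hdiag _ _ (Subtype.coe_ne_coe.mpr hne), hM, hne, mul_div_cancel₀ _ (hα ℓ)]
  subst hV
  refine (exists_ne_zero_forall_apply_eq_zero_iff_det_gram_eq_zero B
    (e.linearIndependent_add_mem_span_compl I w hw)).trans ?_
  rw [hgram, Matrix.det_mul, Matrix.det_diagonal, mul_eq_zero,
    or_iff_right (Finset.prod_ne_zero_iff.mpr fun (ℓ : I) _ => hα ℓ)]

theorem statement9 (n m : ℕ) (hn : 3 ≤ n) (hm : 2 ≤ m ∧ m ≤ n - 1)
    (e : Module.Basis (Fin n) ℝ (Fin n → ℝ))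
    (B : (Fin n → ℝ) →ₗ[ℝ] (Fin n → ℝ) →ₗ[ℝ] ℝ)
    (hsymm : ∀ x y, B x y = B y x)
    (α : Fin n → ℝ) (hα : ∀ i, α i ≠ 0)
    (hdiag : ∀ i j, i ≠ j → B (e i) (e j) = 0)
    (hdiag2 : ∀ i, B (e i) (e i) = α i)
    (I : Finset (Fin n)) (hI : I.card = m)
    (w : I → (Fin n → ℝ))
    (hw : ∀ i : I, w i ∈ Submodule.span ℝ (⇑e '' ((↑(Iᶜ) : Set (Fin n)))))
    (V : Submodule ℝ (Fin n → ℝ))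
    (hV : V = Submodule.span ℝ (Set.range fun i : I => e i.1 + w i))
    (M : Matrix I I ℝ) (hM : ∀ ℓ ℓ' : I, M ℓ ℓ' = B (w ℓ) (w ℓ') / α ℓ.1) :
    (∃ v ∈ V, v ≠ 0 ∧ ∀ x ∈ V, B v x = 0) ↔ (M + 1).det = 0 :=
  statement9_general n e B α hα hdiag hdiag2 I w hw V hV M hM
end

section
/- (Pyartli–Rüssmann measure estimate.) Let a < b be real numbers, let q ≥ 1 be an integer and β > 0. Let f : [a,b] → ℝ be q times continuously differentiable with |f^{(q)}(t)| > β for all t ∈ [a,b]. Then for every ρ > 0 the Lebesgue measure of the set {t ∈ [a,b] : |f(t)| ≤ ρ} is at most 4·(q!·ρ/(2β))^{1/q}. -/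
/-!
Let `E = {t ∈ [a, b] : |f t| ≤ ρ}` and `0 < L < |E|`. Transporting the `q + 1` extremal points
`x_j = cos (j π / q)` of the Chebyshev polynomial `T_q`, rescaled to an interval of length `L`,
through the quantile function of `t ↦ |E ∩ (-∞, t]|` (which is `1`-Lipschitz) gives points
`t_0 < ⋯ < t_q` of `E` with `|t_j - t_i| ≥ (L / 2) |x_j - x_i|`. Iterated Rolle applied to `f`
minus its interpolation polynomial yields `ξ` with `f^{(q)}(ξ) = q! [t_0, …, t_q] f`. Writing the
divided difference in Lagrange form and using `|f t_j| ≤ ρ` together with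
`∑_j ∏_{i ≠ j} |x_j - x_i|⁻¹ = 2^{q-1}`, the leading coefficient of `T_q`, we get
`β < q! ρ (2 / L)^q 2^{q-1}`, that is `L < 4 (q! ρ / (2 β))^{1/q}`; now let `L` tend to `|E|`.
-/

open Set MeasureTheory Polynomial
open scoped ENNReal Nat

section Distribution

variable {E : Set ℝ}

lemma measureReal_inter_Iic_le_add (hE : volume E ≠ ∞) {s t : ℝ} (hst : s ≤ t) :
    volume.real (E ∩ Iic t) ≤ volume.real (E ∩ Iic s) + (t - s) := by
  have hsub : E ∩ Iic t ⊆ E ∩ Iic s ∪ Ioc s t := fun x ⟨hxE, hxt⟩ ↦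
    (le_or_gt x s).imp (fun h ↦ ⟨hxE, h⟩) (fun h ↦ ⟨h, hxt⟩)
  calc volume.real (E ∩ Iic t) ≤ volume.real (E ∩ Iic s ∪ Ioc s t) :=
        measureReal_mono hsub (measure_union_ne_top
          (measure_ne_top_of_subset inter_subset_left hE) measure_Ioc_lt_top.ne)
    _ ≤ volume.real (E ∩ Iic s) + volume.real (Ioc s t) := measureReal_union_le _ _
    _ = volume.real (E ∩ Iic s) + (t - s) := by rw [Real.volume_real_Ioc_of_le hst]

lemma monotone_measureReal_inter_Iic (hE : volume E ≠ ∞) :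
    Monotone fun t ↦ volume.real (E ∩ Iic t) := fun _ _ hst ↦
  measureReal_mono (inter_subset_inter_right _ (Iic_subset_Iic.2 hst))
    (measure_ne_top_of_subset inter_subset_left hE)

lemma lipschitzWith_one_measureReal_inter_Iic (hE : volume E ≠ ∞) :
    LipschitzWith 1 fun t ↦ volume.real (E ∩ Iic t) := by
  refine LipschitzWith.of_le_add fun x y ↦ ?_
  rcases le_total y x with h | h
  · exact (measureReal_inter_Iic_le_add hE h).trans
      (by rw [Real.dist_eq]; gcongr; exact le_abs_self _)
  · exact (monotone_measureReal_inter_Iic hE h).trans (le_add_of_nonneg_right dist_nonneg)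

theorem IsCompact.exists_mem_measureReal_inter_Iic_eq (hE : IsCompact E) {c : ℝ}
    (hc : c ∈ Ioc 0 (volume.real E)) :
    ∃ t ∈ E, volume.real (E ∩ Iic t) = c ∧ ∀ x, c ≤ volume.real (E ∩ Iic x) → t ≤ x := by
  have hfin : volume E ≠ ∞ := hE.measure_lt_top.ne
  set F : ℝ → ℝ := fun t ↦ volume.real (E ∩ Iic t)
  have hF : Continuous F := (lipschitzWith_one_measureReal_inter_Iic hfin).continuous
  set S := {x | c ≤ F x}
  obtain ⟨l, hl⟩ := hE.bddBelow
  obtain ⟨u, hu⟩ := hE.bddAbove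
  have hS_bdd : BddBelow S := ⟨l, fun x hx ↦ le_of_not_gt fun hxl ↦ by
    have : E ∩ Iic x = ∅ := eq_empty_of_forall_notMem fun y ⟨hyE, hyx⟩ ↦
      (hyx.trans_lt hxl).not_ge (hl hyE)
    exact hc.1.not_ge (by simpa [S, F, this] using hx)⟩
  have hS_ne : S.Nonempty := ⟨u, by
    simpa [S, F, inter_eq_left.2 fun y (hy : y ∈ E) ↦ mem_Iic.2 (hu hy)] using hc.2⟩
  have hSt : sInf S ∈ S := (isClosed_le continuous_const hF).csInf_mem hS_ne hS_bdd
  have hlt : ∀ x < sInf S, F x < c := fun x hx ↦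
    lt_of_not_ge fun h ↦ (csInf_le hS_bdd h).not_gt hx
  refine ⟨sInf S, ?_, le_antisymm ?_ hSt, fun x hx ↦ csInf_le hS_bdd hx⟩
  · -- otherwise `F` is constant on a left neighbourhood of `sInf S`
    by_contra hnot
    obtain ⟨l', u', ⟨hl't, htu'⟩, hsub⟩ :=
      mem_nhds_iff_exists_Ioo_subset.1 (hE.isClosed.isOpen_compl.mem_nhds hnot)
    have : F (sInf S) ≤ F l' := measureReal_mono (fun y ⟨hyE, hyt⟩ ↦ ⟨hyE, le_of_not_gt fun hy ↦
      hsub ⟨hy, hyt.trans_lt htu'⟩ hyE⟩) (measure_ne_top_of_subset inter_subset_left hfin)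
    exact (hlt l' hl't).not_ge (hSt.trans this)
  · exact le_of_tendsto (hF.continuousWithinAt (s := Iio (sInf S)))
      (eventually_nhdsWithin_of_forall fun x hx ↦ (hlt x hx).le)

theorem IsCompact.exists_forall_sub_le_sub {ι : Type*} (hE : IsCompact E) {c : ι → ℝ}
    (hc : ∀ i, c i ∈ Ioc 0 (volume.real E)) :
    ∃ t : ι → ℝ, (∀ i, t i ∈ E) ∧ ∀ i j, c i ≤ c j → c j - c i ≤ t j - t i := by
  choose t htE hFt hleast using fun i ↦ hE.exists_mem_measureReal_inter_Iic_eq (hc i)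
  refine ⟨t, htE, fun i j hij ↦ ?_⟩
  have := measureReal_inter_Iic_le_add hE.measure_lt_top.ne (hleast i _ (hij.trans (hFt j).ge))
  rw [hFt, hFt] at this
  linarith

end Distribution

theorem Polynomial.iteratedDeriv_eval {𝕜 : Type*} [NontriviallyNormedField 𝕜] (p : 𝕜[X])
    (n : ℕ) (x : 𝕜) : iteratedDeriv n (fun x ↦ p.eval x) x = (derivative^[n] p).eval x := by
  induction n generalizing p with
  | zero => simp
  | succ n ih =>
    have : _root_.deriv (fun x ↦ p.eval x) = fun x ↦ (derivative p).eval x := by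
      ext; exact p.deriv
    rw [iteratedDeriv_succ', this, ih, Function.iterate_succ_apply]

section DividedDifference

open Finset

variable {s : Set ℝ}

theorem exists_iteratedDerivWithin_eq_zero (hs : s.OrdConnected) (hs' : UniqueDiffOn ℝ s)
    {k : ℕ} {g : ℝ → ℝ} (hg : ContDiffOn ℝ k g s) {u : Fin (k + 1) → ℝ} (hu : StrictMono u)
    (hus : ∀ i, u i ∈ s) (hgu : ∀ i, g (u i) = 0) :
    ∃ ξ ∈ s, iteratedDerivWithin k g s ξ = 0 := by
  induction k generalizing g with
  | zero => exact ⟨u 0, hus 0, by simpa using hgu 0⟩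
  | succ k ih =>
    have hrolle : ∀ i : Fin (k + 1), ∃ c ∈ Ioo (u i.castSucc) (u i.succ),
        derivWithin g s c = 0 := fun i ↦ by
      have hIcc : Icc (u i.castSucc) (u i.succ) ⊆ s := hs.out (hus _) (hus _)
      obtain ⟨c, hc, hc0⟩ := exists_deriv_eq_zero (hu Fin.castSucc_lt_succ)
        (hg.continuousOn.mono hIcc) ((hgu _).trans (hgu _).symm)
      refine ⟨c, hc, ?_⟩
      rw [derivWithin_of_mem_nhds (Filter.mem_of_superset (isOpen_Ioo.mem_nhds hc)
        (Ioo_subset_Icc_self.trans hIcc)), hc0]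
    choose c hc hc0 using hrolle
    have hc_mono : StrictMono c := fun i j hij ↦
      (hc i).2.trans ((hu.monotone (Fin.succ_le_castSucc_iff.2 hij)).trans_lt (hc j).1)
    have hcs : ∀ i, c i ∈ s := fun i ↦ hs.out (hus _) (hus _) (Ioo_subset_Icc_self (hc i))
    rw [iteratedDerivWithin_succ']
    exact ih (hg.derivWithin hs' (by norm_cast)) hc_mono hcs hc0

noncomputable def dividedDifference {n : ℕ} (t : Fin n → ℝ) (f : ℝ → ℝ) : ℝ :=
  ∑ j, f (t j) / ∏ i ∈ univ.erase j, (t j - t i)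

theorem exists_iteratedDerivWithin_eq_factorial_mul_dividedDifference (hs : s.OrdConnected)
    (hs' : UniqueDiffOn ℝ s) {n : ℕ} {f : ℝ → ℝ} (hf : ContDiffOn ℝ n f s)
    {t : Fin (n + 1) → ℝ} (ht : StrictMono t) (hts : ∀ i, t i ∈ s) :
    ∃ ξ ∈ s, iteratedDerivWithin n f s ξ = n ! * dividedDifference t f := by
  set P := Lagrange.interpolate univ t fun j ↦ f (t j)
  have hinj : Set.InjOn t (univ : Finset (Fin (n + 1))) := ht.injective.injOn
  have hP : ContDiff ℝ n fun x ↦ P.eval x := by simpa using P.contDiff_aeval (𝕜 := ℝ) n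
  have hPt : ∀ j, P.eval (t j) = f (t j) := fun j ↦
    Lagrange.eval_interpolate_at_node _ hinj (mem_univ j)
  obtain ⟨ξ, hξ, hξ0⟩ := exists_iteratedDerivWithin_eq_zero (g := f - fun x ↦ P.eval x) hs hs'
    (hf.sub hP.contDiffOn) ht hts fun j ↦ sub_eq_zero.2 (hPt j).symm
  refine ⟨ξ, hξ, ?_⟩
  rw [iteratedDerivWithin_sub hξ hs' (hf ξ hξ) hP.contDiffAt.contDiffWithinAt, sub_eq_zero,
    iteratedDerivWithin_eq_iteratedDeriv hs' hP.contDiffAt hξ, P.iteratedDeriv_eval] at hξ0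
  rw [Lagrange.eval_iterate_derivative_eq_sum hinj (Lagrange.degree_interpolate_lt _ hinj)
      (by simp)] at hξ0
  simp only [card_univ, Fintype.card_fin, Nat.sub_self, powersetCard_zero, sum_singleton,
    Finset.prod_empty, mul_one] at hξ0
  simpa only [dividedDifference, Lagrange.eval_interpolate_at_node _ hinj (mem_univ _)] using hξ0

theorem abs_dividedDifference_le {n : ℕ} {t x : Fin (n + 1) → ℝ} {f : ℝ → ℝ} {ρ r : ℝ}
    (hr : 0 < r) (hx : Function.Injective x) (hf : ∀ j, |f (t j)| ≤ ρ)
    (hdist : ∀ i j, r * |x j - x i| ≤ |t j - t i|) :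
    |dividedDifference t f| ≤ ρ / r ^ n * ∑ j, (∏ i ∈ univ.erase j, |x j - x i|)⁻¹ := by
  have hρ : 0 ≤ ρ := (abs_nonneg _).trans (hf 0)
  have hcard : ∀ j : Fin (n + 1), #(univ.erase j) = n := fun j ↦ by simp
  have hprod : ∀ j, r ^ n * ∏ i ∈ univ.erase j, |x j - x i| ≤ ∏ i ∈ univ.erase j, |t j - t i| :=
    fun j ↦ calc
      r ^ n * ∏ i ∈ univ.erase j, |x j - x i| = ∏ i ∈ univ.erase j, r * |x j - x i| := by
        rw [prod_mul_distrib, prod_const, hcard j]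
      _ ≤ ∏ i ∈ univ.erase j, |t j - t i| :=
        prod_le_prod (fun _ _ ↦ by positivity) fun i _ ↦ hdist i j
  have hpos : ∀ j, 0 < r ^ n * ∏ i ∈ univ.erase j, |x j - x i| := fun j ↦
    mul_pos (pow_pos hr n) (prod_pos fun i hi ↦
      abs_pos.2 (sub_ne_zero.2 (hx.ne (ne_of_mem_erase hi).symm)))
  unfold dividedDifference
  calc |∑ j, f (t j) / ∏ i ∈ univ.erase j, (t j - t i)|
      ≤ ∑ j, |f (t j)| / ∏ i ∈ univ.erase j, |t j - t i| := by
        exact (abs_sum_le_sum_abs _ _).trans_eq (by simp only [abs_div, abs_prod])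
    _ ≤ ∑ j, ρ / (r ^ n * ∏ i ∈ univ.erase j, |x j - x i|) := by
        gcongr with j
        · exact hpos j
        · exact hf j
        · exact hprod j
    _ = ρ / r ^ n * ∑ j, (∏ i ∈ univ.erase j, |x j - x i|)⁻¹ := by
        simp only [mul_sum, div_eq_mul_inv, mul_inv, mul_assoc]

end DividedDifference

namespace Polynomial.Chebyshev

open Finset

theorem strictAnti_node_comp_val (n : ℕ) :
    StrictAnti fun i : Fin (n + 1) ↦ node n i := fun _ j hij ↦
  node_lt (Nat.lt_succ_iff.1 j.2) hij

theorem sum_inv_prod_abs_node_sub_node (n : ℕ) :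
    ∑ j : Fin (n + 1), (∏ i ∈ univ.erase j, |node n j - node n i|)⁻¹ = 2 ^ (n - 1) := by
  have hcoeff := Lagrange.coeff_eq_sum (strictAnti_node_comp_val n).injective.injOn (s := univ)
    (P := T ℝ n) (by simp; exact_mod_cast n.lt_succ_self)
  have hsign : ∀ j : Fin (n + 1),
      0 < (-1) ^ (j : ℕ) * ∏ i ∈ univ.erase j, (node n j - node n i) := fun j ↦ by
    have hmap : (univ.erase j).map Fin.valEmbedding = (range (n + 1)).erase j := by
      rw [map_erase, Fin.map_valEmbedding_univ, Nat.Iio_eq_range]; rfl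
    have := zero_lt_prod_node_sub_node (Nat.lt_succ_iff.1 j.2)
    rwa [← hmap, prod_map] at this
  have hterm : ∀ j : Fin (n + 1),
      (T ℝ n).eval (node n j) / ∏ i ∈ univ.erase j, (node n j - node n i) =
        (∏ i ∈ univ.erase j, |node n j - node n i|)⁻¹ := fun j ↦ by
    have habs : |∏ i ∈ univ.erase j, (node n j - node n i)|
        = (-1) ^ (j : ℕ) * ∏ i ∈ univ.erase j, (node n j - node n i) := by
      rw [← abs_of_pos (hsign j), abs_mul, abs_pow, abs_neg, abs_one, one_pow, one_mul]
    rw [eval_T_real_node (by simpa using Nat.lt_succ_iff.1 j.2), ← abs_prod, habs, mul_inv,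
      ← inv_pow, inv_neg_one, div_eq_mul_inv]
  simp only [card_univ, Fintype.card_fin, Nat.add_sub_cancel, hterm] at hcoeff
  have := leadingCoeff_T ℝ n
  rwa [leadingCoeff, natDegree_T, Int.natAbs_natCast, hcoeff] at this

end Polynomial.Chebyshev

open Polynomial.Chebyshev in
theorem IsCompact.exists_strictMono_mul_abs_node_sub_le {E : Set ℝ} (hE : IsCompact E)
    {L : ℝ} (hL : 0 < L) (hLE : L < volume.real E) (q : ℕ) :
    ∃ t : Fin (q + 1) → ℝ, StrictMono t ∧ (∀ j, t j ∈ E) ∧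
      ∀ i j : Fin (q + 1), L / 2 * |node q j - node q i| ≤ |t j - t i| := by
  set c : Fin (q + 1) → ℝ := fun j ↦ volume.real E - L + (1 - node q j) * (L / 2)
  have hc : ∀ j, c j ∈ Ioc 0 (volume.real E) := fun j ↦ by
    have := node_mem_Icc (n := q) (i := j)
    simp only [c, Set.mem_Ioc]
    constructor <;> nlinarith [this.1, this.2]
  have hc_mono : StrictMono c := fun i j hij ↦ by
    have := strictAnti_node_comp_val q hij
    simp only [c]
    nlinarith
  obtain ⟨t, htE, hgap⟩ := hE.exists_forall_sub_le_sub hc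
  refine ⟨t, fun i j hij ↦ by linarith [hgap i j (hc_mono hij).le, hc_mono hij], htE,
    fun i j ↦ ?_⟩
  have hcij : L / 2 * |node q j - node q i| = |c j - c i| := by
    rw [abs_sub_comm, ← abs_of_pos (half_pos hL), ← abs_mul]
    simp only [c]
    ring_nf
  rw [hcij]
  rcases le_total (c i) (c j) with h | h
  · rw [abs_of_nonneg (sub_nonneg.2 h)]
    exact (hgap i j h).trans (le_abs_self _)
  · rw [abs_sub_comm, abs_of_nonneg (sub_nonneg.2 h), abs_sub_comm]
    exact (hgap j i h).trans (le_abs_self _)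

open Polynomial.Chebyshev in
theorem half_pow_mul_le_of_lt_measureReal {s E : Set ℝ} (hs : s.OrdConnected)
    (hs' : UniqueDiffOn ℝ s) {q : ℕ} {f : ℝ → ℝ} (hf : ContDiffOn ℝ q f s) {β ρ : ℝ}
    (hder : ∀ t ∈ s, β ≤ |iteratedDerivWithin q f s t|) (hE : IsCompact E) (hEs : E ⊆ s)
    (hfE : ∀ t ∈ E, |f t| ≤ ρ) {L : ℝ} (hL : 0 < L) (hLE : L < volume.real E) :
    (L / 2) ^ q * β ≤ 2 ^ (q - 1) * q ! * ρ := by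
  obtain ⟨t, ht, htE, hdist⟩ := hE.exists_strictMono_mul_abs_node_sub_le hL hLE q
  obtain ⟨ξ, hξ, hξeq⟩ :=
    exists_iteratedDerivWithin_eq_factorial_mul_dividedDifference hs hs' hf ht fun j ↦ hEs (htE j)
  have hbound := abs_dividedDifference_le (half_pos hL) (strictAnti_node_comp_val q).injective
    (fun j ↦ hfE _ (htE j)) hdist
  rw [sum_inv_prod_abs_node_sub_node] at hbound
  calc (L / 2) ^ q * β ≤ (L / 2) ^ q * (q ! * |dividedDifference t f|) := by
        gcongr
        simpa [hξeq, abs_mul] using hder ξ hξ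
    _ ≤ (L / 2) ^ q * (q ! * (ρ / (L / 2) ^ q * 2 ^ (q - 1))) := by gcongr
    _ = 2 ^ (q - 1) * q ! * ρ := by field_simp

theorem statement16 (a b : ℝ) (hab : a < b) (q : ℕ) (hq : 1 ≤ q) (β : ℝ) (hβ : 0 < β)
    (f : ℝ → ℝ) (hf : ContDiffOn ℝ q f (Set.Icc a b))
    (hder : ∀ t ∈ Set.Icc a b, β < |iteratedDerivWithin q f (Set.Icc a b) t|) :
    ∀ ρ > (0:ℝ),
      MeasureTheory.volume {t | t ∈ Set.Icc a b ∧ |f t| ≤ ρ} ≤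
        ENNReal.ofReal (4 * ((q.factorial : ℝ) * ρ / (2 * β)) ^ (1 / (q : ℝ))) := by
  intro ρ hρ
  set E := {t | t ∈ Icc a b ∧ |f t| ≤ ρ}
  have hE : IsCompact E := isCompact_Icc.of_isClosed_subset
    (hf.continuousOn.preimage_isClosed_of_isClosed isClosed_Icc
      (isClosed_le continuous_abs continuous_const)) fun _ ht ↦ ht.1
  have hA : 0 ≤ (q ! : ℝ) * ρ / (2 * β) := by positivity
  rw [← ofReal_measureReal hE.measure_lt_top.ne]
  refine ENNReal.ofReal_le_ofReal (le_of_forall_lt_imp_le_of_dense fun L hL ↦ ?_)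
  rcases le_or_gt L 0 with hL0 | hL0
  · exact hL0.trans (by positivity)
  have hpow := half_pow_mul_le_of_lt_measureReal ordConnected_Icc (uniqueDiffOn_Icc hab) hf
    (fun t ht ↦ (hder t ht).le) hE (fun _ ht ↦ ht.1) (fun _ ht ↦ ht.2) hL0 hL
  refine le_of_pow_le_pow_left₀ (by omega : q ≠ 0) (by positivity) ?_
  rw [mul_pow, one_div, Real.rpow_inv_natCast_pow hA (by omega)]
  have h4 : (4 : ℝ) ^ q = 2 * (2 ^ q * 2 ^ (q - 1)) := by
    rw [← pow_add, ← pow_succ', show (4 : ℝ) = 2 ^ 2 by norm_num, ← pow_mul]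
    congr 1
    omega
  calc L ^ q = 2 ^ q * (L / 2) ^ q := by rw [div_pow, mul_div_cancel₀ _ (by positivity)]
    _ ≤ 2 ^ q * (2 ^ (q - 1) * q ! * ρ / β) := by gcongr; rwa [le_div_iff₀ hβ]
    _ = 4 ^ q * ((q ! : ℝ) * ρ / (2 * β)) := by rw [h4]; field_simp
end

section
/- (Quantitative local inversion theorem for holomorphic functions.) Let R > 0, let f be holomorphic on an open subset of ℂ containing the closed disc D̄_R(0) := {z ∈ ℂ : |z| ≤ R}, and let z* ∈ ℂ satisfy |z*| < R/2 and f'(z*) ≠ 0. Set M := max_{|z|≤R} |f''(z)| and R' := (1/2)·min{R, |f'(z*)|/M}, with the convention R' := R/2 when M = 0. Then: (i) f is injective on the closed disc D̄_{R'/16}(z*); (ii) f(D̄_{R'/16}(z*)) ⊆ D̄_{|f'(z*)|·R'/8}(f(z*)); and (iii) there exists a function g, holomorphic on an open set containing the closed disc D̄_{|f'(z*)|·R'/8}(f(z*)), such that f(g(w)) = w for every w ∈ D̄_{|f'(z*)|·R'/8}(f(z*)) and g(f(z)) = z for every z ∈ D̄_{R'/16}(z*). -/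
/-!  Quantitative local inversion theorem for holomorphic functions. -/

theorem statement17 (R : ℝ) (hR : 0 < R) (U : Set ℂ) (hU : IsOpen U)
    (hUR : Metric.closedBall (0:ℂ) R ⊆ U) (f : ℂ → ℂ) (hf : DifferentiableOn ℂ f U)
    (zs : ℂ) (hzs : ‖zs‖ < R / 2) (hfz : deriv f zs ≠ 0)
    (M : ℝ) (hM : M = ⨆ z : Metric.closedBall (0:ℂ) R, ‖deriv (deriv f) (z : ℂ)‖)
    (R' : ℝ) (hR' : R' = if M = 0 then R / 2 else (1/2) * min R (‖deriv f zs‖ / M)) :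
    Set.InjOn f (Metric.closedBall zs (R' / 16)) ∧
    f '' Metric.closedBall zs (R' / 16) ⊆
      Metric.closedBall (f zs) (‖deriv f zs‖ * R' / 8) ∧
    ∃ (V : Set ℂ) (g : ℂ → ℂ), IsOpen V ∧
      Metric.closedBall (f zs) (‖deriv f zs‖ * R' / 8) ⊆ V ∧
      DifferentiableOn ℂ g V ∧
      (∀ w ∈ Metric.closedBall (f zs) (‖deriv f zs‖ * R' / 8), f (g w) = w) ∧
      (∀ z ∈ Metric.closedBall zs (R' / 16), g (f z) = z) := by
  classical
  set c := ‖deriv f zs‖ with hc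
  have hc0 : 0 < c := norm_pos_iff.mpr hfz
  -- analyticity of f and its derivatives on U
  have hfa : AnalyticOnNhd ℂ f U := hf.analyticOnNhd hU
  have hfa1 : AnalyticOnNhd ℂ (deriv f) U := hfa.deriv
  have hfa2 : AnalyticOnNhd ℂ (deriv (deriv f)) U := hfa1.deriv
  -- M is an upper bound for ‖f''‖ on the big ball
  have hMb : ∀ z ∈ Metric.closedBall (0:ℂ) R, ‖deriv (deriv f) z‖ ≤ M := by
    obtain ⟨C, hC⟩ := (isCompact_closedBall (0:ℂ) R).exists_bound_of_continuousOn
      ((hfa2.continuousOn).mono hUR)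
    intro z hz
    rw [hM]
    exact le_ciSup (f := fun z : Metric.closedBall (0:ℂ) R => ‖deriv (deriv f) (z:ℂ)‖)
      ⟨C, by rintro _ ⟨w, rfl⟩; exact hC w w.2⟩ (⟨z, hz⟩ : Metric.closedBall (0:ℂ) R)
  have h0mem : (0:ℂ) ∈ Metric.closedBall (0:ℂ) R := by
    simp [Metric.mem_closedBall, hR.le]
  have hM0 : 0 ≤ M := le_trans (norm_nonneg _) (hMb 0 h0mem)
  -- basic facts about R'
  have hR'pos : 0 < R' := by
    rw [hR']
    split_ifs with h
    · linarith
    · have hMpos : 0 < M := lt_of_le_of_ne hM0 (Ne.symm h)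
      have : 0 < min R (c / M) := lt_min hR (div_pos hc0 hMpos)
      linarith
  have hR'R : R' ≤ R / 2 := by
    rw [hR']
    split_ifs with h
    · exact le_rfl
    · have : min R (c / M) ≤ R := min_le_left _ _
      linarith
  have hMR' : M * R' ≤ c / 2 := by
    rw [hR']
    split_ifs with h
    · rw [h]; simp; positivity
    · have hMpos : 0 < M := lt_of_le_of_ne hM0 (Ne.symm h)
      have h1 : min R (c / M) ≤ c / M := min_le_right _ _
      have := mul_le_mul_of_nonneg_left h1 hMpos.le
      rw [mul_div_cancel₀ _ (ne_of_gt hMpos)] at this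
      nlinarith
  -- the ball of radius R' around zs sits inside the big ball
  have hball : Metric.closedBall zs R' ⊆ Metric.closedBall (0:ℂ) R := by
    intro z hz
    rw [Metric.mem_closedBall] at hz ⊢
    have : dist z 0 ≤ dist z zs + dist zs 0 := dist_triangle _ _ _
    have hz0 : dist zs 0 = ‖zs‖ := by simp
    linarith [hz, this, hzs, hR'R, hz0 ▸ this]
  have hballU : Metric.closedBall zs R' ⊆ U := fun z hz => hUR (hball hz)
  -- derivative estimate on the ball of radius R'
  have hd1 : ∀ z ∈ Metric.closedBall zs R', ‖deriv f z - deriv f zs‖ ≤ M * ‖z - zs‖ := by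
    intro z hz
    have hzsmem : zs ∈ Metric.closedBall zs R' := Metric.mem_closedBall_self hR'pos.le
    exact Convex.norm_image_sub_le_of_norm_deriv_le (𝕜 := ℂ)
      (fun x hx => (hfa1 x (hballU hx)).differentiableAt)
      (fun x hx => hMb x (hball hx)) (convex_closedBall _ _) hzsmem hz
  have hd2 : ∀ z ∈ Metric.closedBall zs R', ‖deriv f z - deriv f zs‖ ≤ c / 2 := by
    intro z hz
    refine le_trans (hd1 z hz) (le_trans ?_ hMR')
    have : ‖z - zs‖ ≤ R' := by
      rw [Metric.mem_closedBall, dist_eq_norm] at hz; exact hz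
    exact mul_le_mul_of_nonneg_left this hM0
  -- the fundamental estimate
  have hdiff : ∀ z ∈ Metric.closedBall zs R', ∀ w ∈ Metric.closedBall zs R',
      ‖f z - f w - deriv f zs * (z - w)‖ ≤ c / 2 * ‖z - w‖ := by
    intro z hz w hw
    have key : ‖(f z - deriv f zs * z) - (f w - deriv f zs * w)‖ ≤ c / 2 * ‖z - w‖ := by
      refine Convex.norm_image_sub_le_of_norm_deriv_le (𝕜 := ℂ)
        (f := fun x => f x - deriv f zs * x) ?_ ?_ (convex_closedBall _ _) hw hz
      · intro x hx
        exact ((hfa x (hballU hx)).differentiableAt).sub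
          ((differentiable_id.const_mul _) x)
      · intro x hx
        have hdx : deriv (fun x => f x - deriv f zs * x) x = deriv f x - deriv f zs := by
          have h1 : HasDerivAt f (deriv f x) x :=
            ((hfa x (hballU hx)).differentiableAt).hasDerivAt
          have h2 : HasDerivAt (fun x : ℂ => deriv f zs * x) (deriv f zs) x := by
            simpa using (hasDerivAt_id x).const_mul (deriv f zs)
          exact (h1.sub h2).deriv
        rw [hdx]
        exact hd2 x hx
    calc ‖f z - f w - deriv f zs * (z - w)‖
        = ‖(f z - deriv f zs * z) - (f w - deriv f zs * w)‖ := by ring_nf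
      _ ≤ c / 2 * ‖z - w‖ := key
  -- injectivity on the ball of radius R'
  have hinj : Set.InjOn f (Metric.closedBall zs R') := by
    intro z hz w hw hfzw
    by_contra hne
    have hzw0 : 0 < ‖z - w‖ := norm_pos_iff.mpr (sub_ne_zero.mpr hne)
    have h1 := hdiff z hz w hw
    rw [hfzw, sub_self, zero_sub, norm_neg, norm_mul] at h1
    nlinarith
  have hsub16 : Metric.closedBall zs (R' / 16) ⊆ Metric.closedBall zs R' :=
    Metric.closedBall_subset_closedBall (by linarith)
  have hsub3 : Metric.closedBall zs (R' / 3) ⊆ Metric.closedBall zs R' :=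
    Metric.closedBall_subset_closedBall (by linarith)
  -- part (ii)
  have himg : ∀ z ∈ Metric.closedBall zs (R' / 16), ‖f z - f zs‖ ≤ 3 * c * R' / 32 := by
    intro z hz
    have hz' : z ∈ Metric.closedBall zs R' := hsub16 hz
    have hzs' : zs ∈ Metric.closedBall zs R' := Metric.mem_closedBall_self hR'pos.le
    have h1 := hdiff z hz' zs hzs'
    have hznorm : ‖z - zs‖ ≤ R' / 16 := by
      rw [Metric.mem_closedBall, dist_eq_norm] at hz; exact hz
    have h2 : ‖f z - f zs‖ ≤ ‖f z - f zs - deriv f zs * (z - zs)‖ + ‖deriv f zs * (z - zs)‖ := by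
      have := norm_add_le (f z - f zs - deriv f zs * (z - zs)) (deriv f zs * (z - zs))
      simpa using this
    rw [norm_mul] at h2
    nlinarith [norm_nonneg (z - zs)]
  -- the inverse
  set V : Set ℂ := Metric.ball (f zs) (c * R' / 6) with hV
  have hexists : ∀ w ∈ V, ∃ z ∈ Metric.closedBall zs (R' / 3), f z = w := by
    intro w hw
    rw [hV, Metric.mem_ball, dist_eq_norm] at hw
    set φ : ℂ → ℂ := fun z => z - (f z - w) / deriv f zs with hφ
    have hφlip : ∀ z ∈ Metric.closedBall zs (R' / 3), ∀ v ∈ Metric.closedBall zs (R' / 3),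
        ‖φ z - φ v‖ ≤ 1 / 2 * ‖z - v‖ := by
      intro z hz v hv
      have h1 := hdiff z (hsub3 hz) v (hsub3 hv)
      have heq : φ z - φ v = -((f z - f v - deriv f zs * (z - v)) / deriv f zs) := by
        rw [hφ]
        field_simp
        ring
      rw [heq, norm_neg, norm_div]
      rw [div_le_iff₀ hc0]
      calc ‖f z - f v - deriv f zs * (z - v)‖ ≤ c / 2 * ‖z - v‖ := h1
        _ = 1 / 2 * ‖z - v‖ * c := by ring
    have hφzs : ‖φ zs - zs‖ < R' / 6 := by
      have : φ zs - zs = -((f zs - w) / deriv f zs) := by rw [hφ]; ring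
      rw [this, norm_neg, norm_div, div_lt_iff₀ hc0]
      have : ‖f zs - w‖ = ‖w - f zs‖ := by rw [← norm_neg]; ring_nf
      rw [this]
      calc ‖w - f zs‖ < c * R' / 6 := hw
        _ = R' / 6 * c := by ring
    have hφmaps : Set.MapsTo φ (Metric.closedBall zs (R' / 3)) (Metric.closedBall zs (R' / 3)) := by
      intro z hz
      rw [Metric.mem_closedBall, dist_eq_norm] at hz ⊢
      have h1 : ‖φ z - zs‖ ≤ ‖φ z - φ zs‖ + ‖φ zs - zs‖ := by
        have := norm_add_le (φ z - φ zs) (φ zs - zs)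
        simpa using this
      have h2 := hφlip z (by rw [Metric.mem_closedBall, dist_eq_norm]; exact hz) zs
        (Metric.mem_closedBall_self (by linarith))
      nlinarith
    have hlip : LipschitzWith (1/2 : NNReal)
        (hφmaps.restrict φ (Metric.closedBall zs (R' / 3)) (Metric.closedBall zs (R' / 3))) := by
      apply LipschitzWith.of_dist_le_mul
      rintro ⟨x, hx⟩ ⟨y, hy⟩
      have := hφlip x hx y hy
      simp only [Subtype.dist_eq, Set.MapsTo.val_restrict_apply, dist_eq_norm]
      calc ‖φ x - φ y‖ ≤ 1 / 2 * ‖x - y‖ := this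
        _ = ((1/2 : NNReal) : ℝ) * ‖x - y‖ := by norm_num
    obtain ⟨z, hz, hfix, -, -⟩ := ContractingWith.exists_fixedPoint'
      (Metric.isClosed_closedBall.isComplete) hφmaps ⟨by rw [← NNReal.coe_lt_coe]; norm_num, hlip⟩
      (Metric.mem_closedBall_self (by linarith)) (edist_ne_top _ _)
    refine ⟨z, hz, ?_⟩
    have h3 : z - (f z - w) / deriv f zs = z := hfix
    have h2 : (f z - w) / deriv f zs = 0 := sub_eq_self.mp h3
    rcases div_eq_zero_iff.mp h2 with h2 | h2
    · exact sub_eq_zero.mp h2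
    · exact absurd h2 hfz
  set g : ℂ → ℂ := fun w => if h : ∃ z ∈ Metric.closedBall zs (R' / 3), f z = w
    then h.choose else 0 with hg
  have hgspec : ∀ w ∈ V, g w ∈ Metric.closedBall zs (R' / 3) ∧ f (g w) = w := by
    intro w hw
    have h := hexists w hw
    rw [hg]
    simp only [dif_pos h]
    exact ⟨h.choose_spec.1, h.choose_spec.2⟩
  have hcR' : 0 < c * R' := mul_pos hc0 hR'pos
  have hVsub : Metric.closedBall (f zs) (c * R' / 8) ⊆ V := by
    apply Metric.closedBall_subset_ball
    linarith
  have hfzV : ∀ z ∈ Metric.closedBall zs (R' / 16), f z ∈ V := by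
    intro z hz
    rw [hV, Metric.mem_ball, dist_eq_norm]
    have := himg z hz
    nlinarith
  -- differentiability of g on V
  have hgdiff : DifferentiableOn ℂ g V := by
    intro w hw
    obtain ⟨hgw1, hgw2⟩ := hgspec w hw
    set z := g w with hz
    have hzU : z ∈ U := hballU (hsub3 hgw1)
    obtain ⟨p, hp⟩ := hfa z hzU
    have hst : HasStrictDerivAt f (deriv f z) z := by
      have h1 := hp.hasStrictDerivAt
      have h2 : deriv f z = p.coeff 1 := h1.hasDerivAt.deriv
      rw [h2]; exact h1
    have hdz : deriv f z ≠ 0 := by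
      intro h0
      have := hd2 z (hsub3 hgw1)
      rw [h0, zero_sub, norm_neg] at this
      nlinarith
    have hsf := hst.hasStrictFDerivAt_equiv hdz
    set l := hsf.localInverse f _ z with hl
    have hlz : l (f z) = z := hsf.localInverse_apply_image
    have hlderiv : HasStrictDerivAt l (deriv f z)⁻¹ (f z) := hst.to_localInverse hdz
    have hldiff : DifferentiableAt ℂ l w := by
      rw [← hgw2]
      exact hlderiv.hasDerivAt.differentiableAt
    have heq : g =ᶠ[nhds w] l := by
      have h1 : ∀ᶠ w' in nhds (f z), f (l w') = w' := hsf.eventually_right_inverse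
      have h2 : ∀ᶠ w' in nhds (f z), l w' ∈ Metric.ball zs R' := by
        have hcont : ContinuousAt l (f z) := hsf.localInverse_continuousAt
        have hzball : z ∈ Metric.ball zs R' := by
          have : dist z zs ≤ R' / 3 := Metric.mem_closedBall.mp hgw1
          rw [Metric.mem_ball]; linarith
        have := hcont.preimage_mem_nhds (Metric.isOpen_ball.mem_nhds (hlz ▸ hzball))
        filter_upwards [this] with w' hw' using hw'
      have h3 : ∀ᶠ w' in nhds w, w' ∈ V := hV ▸ Metric.isOpen_ball.mem_nhds hw
      rw [hgw2] at h1 h2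
      filter_upwards [h1, h2, h3] with w' hw1 hw2 hw3
      obtain ⟨hg1, hg2⟩ := hgspec w' hw3
      exact hinj (hsub3 hg1) (Metric.ball_subset_closedBall hw2) (by rw [hg2, hw1])
    exact (hldiff.congr_of_eventuallyEq heq).differentiableWithinAt
  refine ⟨hinj.mono hsub16, ?_, V, g, Metric.isOpen_ball, hVsub, hgdiff, ?_, ?_⟩
  · rintro _ ⟨z, hz, rfl⟩
    rw [Metric.mem_closedBall, dist_eq_norm]
    have := himg z hz
    nlinarith
  · intro w hw
    exact (hgspec w (hVsub hw)).2
  · intro z hz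
    have h1 := hgspec (f z) (hfzV z hz)
    exact hinj (hsub3 h1.1) (hsub16 hz) h1.2
end

section
/- (k-valency of algebraic holomorphic functions.) Let D ⊆ ℂ be a nonempty open, bounded and connected set, let f : D → ℂ be holomorphic and non-constant, let k ≥ 1 be an integer, and let S be a nonzero polynomial in two complex variables of total degree at most k such that S(z, f(z)) = 0 for every z ∈ D. Then f is k-valent: for every w₀ ∈ ℂ, the set {z ∈ D : f(z) = w₀} has at most k elements. -/
open MvPolynomial

/-!  `k`-valency of algebraic holomorphic functions. -/

noncomputable section Statement18Aux

private def φA : MvPolynomial (Fin 1) ℂ →ₐ[ℂ] Polynomial ℂ :=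
  aeval (fun _ => Polynomial.X)

private lemma eval_phiA (c : MvPolynomial (Fin 1) ℂ) (z : ℂ) :
    eval (fun _ : Fin 1 => z) c = (φA c).eval z := by
  have h : (Polynomial.aeval z).comp φA = aeval (fun _ : Fin 1 => z) := by
    apply algHom_ext
    intro i
    simp [φA]
  have h2 := DFunLike.congr_fun h c
  simp only [AlgHom.comp_apply] at h2
  have h3 : (aeval fun _ : Fin 1 => z) c = (eval fun _ : Fin 1 => z) c := by
    rw [aeval_def, eval]
    rfl
  rw [← h3, ← h2, Polynomial.aeval_def, Polynomial.eval]
  rfl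

private lemma phiA_ne_zero {c : MvPolynomial (Fin 1) ℂ} (hc : c ≠ 0) : φA c ≠ 0 := by
  intro h
  apply hc
  apply MvPolynomial.funext
  intro v
  have hv : v = fun _ : Fin 1 => v 0 := by
    funext i
    have : i = 0 := Subsingleton.elim _ _
    rw [this]
  rw [hv, eval_phiA, h, map_zero]
  simp

private lemma natDegree_phiA_le (c : MvPolynomial (Fin 1) ℂ) :
    (φA c).natDegree ≤ c.totalDegree := by
  rw [show φA c = ∑ σ ∈ c.support, φA (monomial σ (coeff σ c)) by
    rw [← map_sum, ← c.as_sum]]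
  apply Polynomial.natDegree_sum_le_of_forall_le
  intro σ hσ
  rw [φA, aeval_monomial]
  refine (Polynomial.natDegree_mul_le).trans ?_
  rw [show (algebraMap ℂ (Polynomial ℂ)) (coeff σ c) = Polynomial.C (coeff σ c) from rfl,
    Polynomial.natDegree_C, zero_add]
  refine le_trans ?_ (le_totalDegree hσ)
  refine (Polynomial.natDegree_prod_le _ _).trans ?_
  rw [Finsupp.sum]
  apply Finset.sum_le_sum
  intro i _
  exact (Polynomial.natDegree_pow _ _).le.trans (by simp [Polynomial.natDegree_X])


private lemma coeff_comp_totalDegree_le {T : Polynomial (MvPolynomial (Fin 1) ℂ)} {k : ℕ}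
    (hT : ∀ i, (T.coeff i).totalDegree ≤ k) (b : ℂ) (i : ℕ) :
    ((T.comp (Polynomial.X + Polynomial.C (C b))).coeff i).totalDegree ≤ k := by
  rw [Polynomial.comp_eq_sum_left, Polynomial.sum, Polynomial.finset_sum_coeff]
  refine (totalDegree_finset_sum _ _).trans (Finset.sup_le ?_)
  intro j _
  rw [Polynomial.coeff_C_mul, Polynomial.coeff_X_add_C_pow]
  refine (totalDegree_mul _ _).trans ?_
  have h1 : ((C b : MvPolynomial (Fin 1) ℂ) ^ (j - i)).totalDegree = 0 := by
    rw [← map_pow, totalDegree_C]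
  have h2 : ((j.choose i : ℕ) : MvPolynomial (Fin 1) ℂ).totalDegree = 0 := by
    rw [← map_natCast (C : ℂ →+* MvPolynomial (Fin 1) ℂ), totalDegree_C]
  have h3 := totalDegree_mul ((C b : MvPolynomial (Fin 1) ℂ) ^ (j - i))
    ((j.choose i : ℕ) : MvPolynomial (Fin 1) ℂ)
  have := hT j
  omega

end Statement18Aux

theorem statement18 (D : Set ℂ) (hne : D.Nonempty) (hopen : IsOpen D)
    (hbdd : Bornology.IsBounded D) (hconn : IsConnected D)
    (f : ℂ → ℂ) (hf : DifferentiableOn ℂ f D)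
    (hnc : ¬ ∃ c : ℂ, ∀ z ∈ D, f z = c)
    (k : ℕ) (hk : 1 ≤ k) (S : MvPolynomial (Fin 2) ℂ) (hS : S ≠ 0)
    (hdeg : S.totalDegree ≤ k) (hzero : ∀ z ∈ D, eval ![z, f z] S = 0) :
    ∀ w₀ : ℂ, ∃ T : Finset ℂ, {z | z ∈ D ∧ f z = w₀} ⊆ ↑T ∧ T.card ≤ k := by
  intro w₀
  classical
  set S₂ : MvPolynomial (Fin 2) ℂ := rename (Equiv.swap 0 1) S with hS₂def
  have hS₂ : S₂ ≠ 0 := by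
    intro h
    exact hS (rename_injective _ (Equiv.swap (0 : Fin 2) 1).injective (by simpa using h))
  set P : Polynomial (MvPolynomial (Fin 1) ℂ) := finSuccEquiv ℂ 1 S₂ with hPdef
  have hP : P ≠ 0 := by
    intro h
    have h2 : (finSuccEquiv ℂ 1) S₂ = (finSuccEquiv ℂ 1) 0 := by
      rw [map_zero]; exact hPdef ▸ h
    exact hS₂ ((finSuccEquiv ℂ 1).injective h2)
  set a : MvPolynomial (Fin 1) ℂ := C w₀ with hadef
  set P₁ : Polynomial (MvPolynomial (Fin 1) ℂ) := P.comp (Polynomial.X + Polynomial.C a)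
    with hP₁def
  have hcomp : P₁.comp (Polynomial.X - Polynomial.C a) = P := by
    rw [hP₁def, Polynomial.comp_assoc, Polynomial.add_comp, Polynomial.X_comp,
      Polynomial.C_comp, sub_add_cancel, Polynomial.comp_X]
  have hP₁ : P₁ ≠ 0 := by
    intro h
    apply hP
    rw [← hcomp, h, Polynomial.zero_comp]
  set m := P₁.natTrailingDegree with hmdef
  set c := P₁.coeff m with hcdef
  have hc : c ≠ 0 := by
    have := Polynomial.trailingCoeff_nonzero_iff_nonzero.mpr hP₁
    rwa [Polynomial.trailingCoeff] at this
  obtain ⟨Q₁, hQ₁⟩ : (Polynomial.X : Polynomial (MvPolynomial (Fin 1) ℂ)) ^ m ∣ P₁ :=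
    Polynomial.X_pow_dvd_iff.mpr fun d hd =>
      Polynomial.coeff_eq_zero_of_lt_natTrailingDegree hd
  set Q := Q₁.comp (Polynomial.X - Polynomial.C a) with hQdef
  have hfac : P = (Polynomial.X - Polynomial.C a) ^ m * Q := by
    rw [← hcomp, hQ₁, Polynomial.mul_comp, Polynomial.pow_comp, Polynomial.X_comp]
  have hQa : Q.eval a = c := by
    rw [hQdef, Polynomial.eval_comp]
    simp only [Polynomial.eval_sub, Polynomial.eval_X, Polynomial.eval_C, sub_self]
    rw [← Polynomial.coeff_zero_eq_eval_zero]
    have h0 := Polynomial.coeff_X_pow_mul Q₁ m 0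
    rw [← hQ₁] at h0
    rw [← h0]
    simp [hcdef]
  -- degree bounds
  have hS₂deg : S₂.totalDegree ≤ k := (totalDegree_rename_le _ _).trans hdeg
  have hPk : ∀ i, (P.coeff i).totalDegree ≤ k := by
    intro i
    by_cases h : P.coeff i = 0
    · simp [h]
    · have h2 := totalDegree_coeff_finSuccEquiv_add_le S₂ i (by rwa [← hPdef])
      rw [← hPdef] at h2
      omega
  have hP₁k : ∀ i, (P₁.coeff i).totalDegree ≤ k := by
    intro i
    rw [hP₁def, hadef]
    exact coeff_comp_totalDegree_le hPk w₀ i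
  have hcdeg : c.totalDegree ≤ k := hP₁k m
  set q : Polynomial ℂ := φA c with hqdef
  have hq0 : q ≠ 0 := phiA_ne_zero hc
  have hqdeg : q.natDegree ≤ k := (natDegree_phiA_le c).trans hcdeg
  -- evaluation key
  have hkey : ∀ z w : ℂ,
      Polynomial.eval w (P.map (eval (fun _ : Fin 1 => z))) = eval ![z, w] S := by
    intro z w
    have h1 := eval_eq_eval_mv_eval' (fun _ : Fin 1 => z) w S₂
    rw [← hPdef] at h1
    rw [← h1, hS₂def, eval_rename,
      show ((Fin.cons w fun _ : Fin 1 => z) ∘ ⇑(Equiv.swap (0 : Fin 2) 1)) = ![z, w] from by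
        funext i; fin_cases i <;> simp]
  set g : ℂ → ℂ := fun z => Polynomial.eval (f z) (Q.map (eval (fun _ : Fin 1 => z)))
    with hgdef
  have hmul : ∀ z ∈ D, (f z - w₀) ^ m * g z = 0 := by
    intro z hz
    have h := hkey z (f z)
    rw [hzero z hz, hfac, Polynomial.map_mul, Polynomial.map_pow, Polynomial.map_sub,
      Polynomial.map_X, Polynomial.map_C, Polynomial.eval_mul, Polynomial.eval_pow,
      Polynomial.eval_sub, Polynomial.eval_X, Polynomial.eval_C] at h
    rw [hgdef]
    simpa [hadef] using h
  have hgsum : g = fun z =>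
      ∑ i ∈ Finset.range (Q.natDegree + 1), (φA (Q.coeff i)).eval z * f z ^ i := by
    funext z
    show Polynomial.eval (f z) (Q.map (eval fun _ : Fin 1 => z)) = _
    rw [Polynomial.eval_eq_sum_range'
      (Polynomial.natDegree_map_le.trans_lt (Nat.lt_succ_self _))]
    refine Finset.sum_congr rfl fun i _ => ?_
    rw [Polynomial.coeff_map, eval_phiA]
  have hgD : DifferentiableOn ℂ g D := by
    rw [hgsum]
    apply DifferentiableOn.fun_sum
    intro i _
    exact ((Polynomial.differentiable _).differentiableOn).mul (hf.pow i)
  refine ⟨q.roots.toFinset, ?_, ?_⟩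
  · rintro z₀ ⟨hz₀D, hfz₀⟩
    have hg0 : g z₀ = 0 := by
      have hfa : AnalyticAt ℂ (fun z => f z - w₀) z₀ :=
        (hf.analyticOnNhd hopen z₀ hz₀D).sub analyticAt_const
      rcases hfa.eventually_eq_zero_or_eventually_ne_zero with hcase | hcase
      · exfalso
        apply hnc
        refine ⟨w₀, fun z hz => ?_⟩
        have heq : Set.EqOn f (fun _ => w₀) D :=
          (hf.analyticOnNhd hopen).eqOn_of_preconnected_of_eventuallyEq
            analyticOnNhd_const hconn.isPreconnected hz₀D
            (hcase.mono fun z hz => by simpa [sub_eq_zero] using hz)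
        exact heq hz
      · have hD' : ∀ᶠ z in nhdsWithin z₀ {z₀}ᶜ, z ∈ D :=
          Filter.Eventually.filter_mono nhdsWithin_le_nhds
            ((hopen.mem_nhds hz₀D : D ∈ nhds z₀) : ∀ᶠ z in nhds z₀, z ∈ D)
        have hg0' : ∀ᶠ z in nhdsWithin z₀ {z₀}ᶜ, g z = 0 := by
          filter_upwards [hcase, hD'] with z h1 h2
          exact (mul_eq_zero.mp (hmul z h2)).resolve_left (pow_ne_zero _ h1)
        have hcont : Filter.Tendsto g (nhdsWithin z₀ {z₀}ᶜ) (nhds (g z₀)) :=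
          ((hgD.differentiableAt (hopen.mem_nhds hz₀D)).continuousAt).tendsto.mono_left
            nhdsWithin_le_nhds
        exact tendsto_nhds_unique hcont
          ((Filter.tendsto_congr' hg0').mpr tendsto_const_nhds)
    have hgq : g z₀ = q.eval z₀ := by
      rw [hgdef]
      simp only
      rw [hfz₀, Polynomial.eval_map,
        show w₀ = (eval fun _ : Fin 1 => z₀) a by simp [hadef],
        Polynomial.eval₂_at_apply, hQa, eval_phiA, hqdef]
    rw [Finset.mem_coe, Multiset.mem_toFinset, Polynomial.mem_roots hq0]
    show q.eval z₀ = 0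
    rw [← hgq]
    exact hg0
  · calc q.roots.toFinset.card ≤ Multiset.card q.roots := q.roots.toFinset_card_le
      _ ≤ q.natDegree := Polynomial.card_roots' q
      _ ≤ k := hqdeg
end
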